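/- arXiv:2206.00456 — 6 statements merged into one kernel-verified Lean document; each statement's English description precedes it below -/
import Mathlib

section
/- Let P ∈ ℚ[z₁,…,z_l] be a multivariate polynomial and let m = (m₁,…,m_l) ∈ ℤ≥0^l. Assume P(m₁,…,m_l) ≠ 0 and P(k₁,…,k_l) = 0 for every (k₁,…,k_l) in the pointed box at m. Then the total degree of P satisfies deg P ≥ m₁ + … + m_l. -/
open Finset fwdDiff

lemma fwdDiff_pow_fun (a : ℕ) :
    Δ_[(1:ℕ)] (fun x : ℕ => (x:ℚ)^a)
      = ∑ b ∈ Finset.range a, (a.choose b : ℚ) • (fun x : ℕ => (x:ℚ)^b) := by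
  ext x
  simp only [fwdDiff, Finset.sum_apply, Pi.smul_apply, smul_eq_mul]
  have h : ((x+1:ℕ):ℚ)^a = ∑ b ∈ Finset.range (a+1), (x:ℚ)^b * (a.choose b : ℚ) := by
    push_cast
    rw [add_pow]
    simp
  rw [h, Finset.sum_range_succ]
  simp [mul_comm]

lemma key (a : ℕ) : ∀ m : ℕ, a < m → (Δ_[(1:ℕ)])^[m] (fun x : ℕ => (x:ℚ)^a) = 0 := by
  induction a using Nat.strong_induction_on with
  | _ a IH =>
    intro m hm
    obtain ⟨n, rfl⟩ := Nat.exists_eq_succ_of_ne_zero (Nat.zero_lt_of_lt hm).ne'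
    rw [Function.iterate_succ_apply, fwdDiff_pow_fun, fwdDiff_iter_finset_sum]
    refine Finset.sum_eq_zero fun b hb => ?_
    rw [fwdDiff_iter_const_smul, IH b (Finset.mem_range.mp hb) n
      (lt_of_lt_of_le (Finset.mem_range.mp hb) (Nat.lt_succ_iff.mp hm)), smul_zero]

lemma key_sum (a m : ℕ) (h : a < m) :
    ∑ k ∈ Finset.range (m+1), (-1:ℚ)^(m-k) * (m.choose k) * (k:ℚ)^a = 0 := by
  have := fwdDiff_iter_eq_sum_shift (1:ℕ) (fun x : ℕ => (x:ℚ)^a) m 0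
  rw [key a m h] at this
  simp only [Pi.zero_apply, smul_eq_mul, mul_one, zero_add, zsmul_eq_mul, Int.cast_mul,
    Int.cast_pow, Int.cast_neg, Int.cast_one, Int.cast_natCast] at this
  exact this.symm

/-- Let `P ∈ ℚ[z₁,…,z_l]` and `m = (m₁,…,m_l) ∈ ℤ≥0^l`.
If `P(m) ≠ 0` and `P(k) = 0` for every `k` in the pointed box at `m`
(i.e. every `k ∈ ℤ≥0^l` with `k_i ≤ m_i` for all `i` and `k ≠ m`),
then the total degree of `P` is at least `m₁ + ⋯ + m_l`. -/
theorem pointed_box_zeros_totalDegree (l : ℕ) (P : MvPolynomial (Fin l) ℚ)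
    (m : Fin l → ℕ)
    (hPm : MvPolynomial.eval (fun i => (m i : ℚ)) P ≠ 0)
    (hbox : ∀ k : Fin l → ℕ, (∀ i, k i ≤ m i) → k ≠ m →
      MvPolynomial.eval (fun i => (k i : ℚ)) P = 0) :
    ∑ i, m i ≤ P.totalDegree := by
  by_contra hlt
  push_neg at hlt
  set T : ℚ := ∑ k ∈ Fintype.piFinset (fun i => Finset.range (m i + 1)),
    (∏ i, (-1:ℚ)^(m i - k i) * ((m i).choose (k i))) *
      MvPolynomial.eval (fun i => (k i : ℚ)) P with hTdef
  have hT1 : T = MvPolynomial.eval (fun i => (m i : ℚ)) P := by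
    rw [hTdef, Finset.sum_eq_single m]
    · simp
    · intro k hk hkm
      rw [hbox k (fun i => Nat.lt_succ_iff.mp
        (Finset.mem_range.mp (Fintype.mem_piFinset.mp hk i))) hkm, mul_zero]
    · intro hm'
      exact absurd (Fintype.mem_piFinset.mpr fun i =>
        Finset.mem_range.mpr (Nat.lt_succ_self _)) hm'
  have hT0 : T = 0 := by
    rw [hTdef]
    have heval : ∀ k : Fin l → ℕ, MvPolynomial.eval (fun i => (k i : ℚ)) P
        = ∑ d ∈ P.support, P.coeff d * ∏ i, (k i : ℚ) ^ d i :=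
      fun k => MvPolynomial.eval_eq' _ _
    calc (∑ k ∈ Fintype.piFinset (fun i => Finset.range (m i + 1)),
        (∏ i, (-1:ℚ)^(m i - k i) * ((m i).choose (k i))) *
          MvPolynomial.eval (fun i => (k i : ℚ)) P)
        = ∑ d ∈ P.support, P.coeff d *
            ∑ k ∈ Fintype.piFinset (fun i => Finset.range (m i + 1)),
              ∏ i, ((-1:ℚ)^(m i - k i) * ((m i).choose (k i)) * (k i : ℚ) ^ d i) := by
          simp_rw [heval, Finset.mul_sum]
          rw [Finset.sum_comm]
          refine Finset.sum_congr rfl fun d _ => Finset.sum_congr rfl fun k _ => ?_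
          simp only [Finset.prod_mul_distrib]
          ring
      _ = 0 := by
          refine Finset.sum_eq_zero fun d hd => ?_
          have hex : ∃ i, d i < m i := by
            by_contra hno
            push_neg at hno
            have h1 : ∑ i, m i ≤ ∑ i, d i := Finset.sum_le_sum fun i _ => hno i
            have h2 : (∑ i, d i) ≤ P.totalDegree := by
              have := MvPolynomial.le_totalDegree hd
              rwa [Finsupp.sum_fintype _ _ (fun _ => rfl)] at this
            omega
          obtain ⟨i, hi⟩ := hex
          rw [show (∑ k ∈ Fintype.piFinset fun i => Finset.range (m i + 1),
              ∏ i, (-1:ℚ)^(m i - k i) * ((m i).choose (k i)) * (k i : ℚ)^(d i))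
            = ∏ i, ∑ j ∈ Finset.range (m i + 1),
              (-1:ℚ)^(m i - j) * ((m i).choose j) * (j : ℚ)^(d i) from
              (Finset.prod_univ_sum (fun i => Finset.range (m i + 1))
              (fun i j => (-1:ℚ)^(m i - j) * ((m i).choose j) * (j : ℚ)^(d i))).symm,
            Finset.prod_eq_zero (Finset.mem_univ i) (key_sum (d i) (m i) hi), mul_zero]
  exact hPm (hT1 ▸ hT0)
end

section
/- Let P ∈ ℚ[z₁,…,z_l] be a multivariate polynomial and let m₁,…,m_l be positive integers. Assume P(−m₁,…,−m_l) ≠ 0, and P(−k₁,…,−k_l) = 0 for all integers k₁,…,k_l with 0 < k_i ≤ m_i for every i and k₁ + … + k_l < m₁ + … + m_l. Then the total degree of P satisfies deg P ≥ (m₁ − 1) + … + (m_l − 1). -/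
open MvPolynomial Finset

noncomputable section PointedBoxAux

variable {l : ℕ}

/-- The backward difference operator in the `i`-th variable:
`(Δᵢ P)(z) = P(z) - P(z - eᵢ)`. -/
def pbDelta (i : Fin l) (P : MvPolynomial (Fin l) ℚ) : MvPolynomial (Fin l) ℚ :=
  P - MvPolynomial.bind₁ (fun j => if j = i then X j - 1 else X j) P

lemma pbDelta_eval (i : Fin l) (P : MvPolynomial (Fin l) ℚ) (x : Fin l → ℚ) :
    eval x (pbDelta i P) = eval x P - eval (Function.update x i (x i - 1)) P := by
  unfold pbDelta
  rw [map_sub]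
  congr 1
  have : (eval x) (bind₁ (fun j => if j = i then X j - 1 else X j) P)
      = (aeval x) (bind₁ (fun j => if j = i then X j - 1 else X j) P) := rfl
  rw [this, aeval_bind₁]
  have : (fun j => (aeval x) (if j = i then (X j - 1 : MvPolynomial (Fin l) ℚ) else X j))
      = Function.update x i (x i - 1) := by
    funext j
    by_cases h : j = i
    · subst h; simp [Function.update_apply]
    · simp [h, Function.update_apply]
  rw [this]
  rfl

/-- `Xᵢⁿ - (Xᵢ - 1)ⁿ` has total degree at most `n - 1`. -/
lemma pb_pow_sub (i : Fin l) (n : ℕ) :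
    ((X i : MvPolynomial (Fin l) ℚ) ^ n - (X i - 1) ^ n).totalDegree ≤ n - 1 := by
  induction n with
  | zero => simp
  | succ n ih =>
    rcases Nat.eq_zero_or_pos n with hn | hn
    · subst hn
      have : (X i : MvPolynomial (Fin l) ℚ) ^ (0 + 1) - (X i - 1) ^ (0 + 1) = 1 := by ring
      rw [this]
      simp
    · have key : (X i : MvPolynomial (Fin l) ℚ) ^ (n + 1) - (X i - 1) ^ (n + 1)
          = (X i - 1) * ((X i) ^ n - (X i - 1) ^ n) + (X i) ^ n := by ring
      rw [key]
      refine (totalDegree_add _ _).trans ?_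
      have h1 : ((X i - 1 : MvPolynomial (Fin l) ℚ) *
          ((X i) ^ n - (X i - 1) ^ n)).totalDegree ≤ 1 + (n - 1) := by
        refine (totalDegree_mul _ _).trans (add_le_add ?_ ih)
        refine (totalDegree_sub_C_le _ _).trans ?_
        simp [totalDegree_X]
      have h2 : ((X i : MvPolynomial (Fin l) ℚ) ^ n).totalDegree ≤ n := by
        simp [totalDegree_X_pow]
      have : 1 + (n - 1) = n := by omega
      rw [this] at h1
      exact max_le (h1.trans (by omega)) (h2.trans (by omega))

lemma pbDelta_monomial (i : Fin l) (s : Fin l →₀ ℕ) (c : ℚ) :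
    (pbDelta i (monomial s c)).totalDegree ≤ (s.sum fun _ e => e) - 1 ∧
      (s i = 0 → pbDelta i (monomial s c) = 0) := by
  unfold pbDelta
  rw [bind₁_monomial]
  by_cases hi : i ∈ s.support
  · have hsi : s i ≠ 0 := Finsupp.mem_support_iff.mp hi
    constructor
    · have hprod : ∏ j ∈ s.support, (if j = i then (X j - 1 : MvPolynomial (Fin l) ℚ) else X j) ^ s j
          = (X i - 1) ^ s i * ∏ j ∈ s.support.erase i, (X j : MvPolynomial (Fin l) ℚ) ^ s j := by
        rw [← Finset.mul_prod_erase _ _ hi]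
        simp only [if_pos rfl]
        congr 1
        refine Finset.prod_congr rfl fun j hj => ?_
        rw [if_neg (Finset.ne_of_mem_erase hj)]
      have hmono : (monomial s c : MvPolynomial (Fin l) ℚ)
          = C c * ((X i) ^ s i * ∏ j ∈ s.support.erase i, (X j : MvPolynomial (Fin l) ℚ) ^ s j) := by
        rw [monomial_eq, Finsupp.prod, ← Finset.mul_prod_erase _ _ hi]
      rw [hprod, hmono]
      have key : C c * ((X i) ^ s i * ∏ j ∈ s.support.erase i, (X j : MvPolynomial (Fin l) ℚ) ^ s j)
          - C c * ((X i - 1) ^ s i * ∏ j ∈ s.support.erase i, (X j : MvPolynomial (Fin l) ℚ) ^ s j)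
          = C c * (((X i) ^ s i - (X i - 1) ^ s i) *
              ∏ j ∈ s.support.erase i, (X j : MvPolynomial (Fin l) ℚ) ^ s j) := by ring
      rw [key]
      refine (totalDegree_mul _ _).trans ?_
      have hC : (C c : MvPolynomial (Fin l) ℚ).totalDegree = 0 := totalDegree_C c
      rw [hC, zero_add]
      refine (totalDegree_mul _ _).trans ?_
      have hA := pb_pow_sub i (s i)
      have hB : (∏ j ∈ s.support.erase i, (X j : MvPolynomial (Fin l) ℚ) ^ s j).totalDegree
          ≤ ∑ j ∈ s.support.erase i, s j := by
        refine (totalDegree_finset_prod _ _).trans ?_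
        refine Finset.sum_le_sum fun j _ => ?_
        simp [totalDegree_X_pow]
      have hsum : s.sum (fun _ e => e) = s i + ∑ j ∈ s.support.erase i, s j := by
        rw [Finsupp.sum, ← Finset.add_sum_erase _ _ hi]
      have : s i - 1 + ∑ j ∈ s.support.erase i, s j = (s.sum fun _ e => e) - 1 := by
        omega
      calc (((X i : MvPolynomial (Fin l) ℚ) ^ s i - (X i - 1) ^ s i)).totalDegree
            + (∏ j ∈ s.support.erase i, (X j : MvPolynomial (Fin l) ℚ) ^ s j).totalDegree
          ≤ (s i - 1) + ∑ j ∈ s.support.erase i, s j := add_le_add hA hB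
        _ = (s.sum fun _ e => e) - 1 := this
    · intro h; exact absurd h hsi
  · have hprod : ∏ j ∈ s.support, (if j = i then (X j - 1 : MvPolynomial (Fin l) ℚ) else X j) ^ s j
        = ∏ j ∈ s.support, (X j : MvPolynomial (Fin l) ℚ) ^ s j := by
      refine Finset.prod_congr rfl fun j hj => ?_
      have : j ≠ i := fun h => hi (h ▸ hj)
      rw [if_neg this]
    have : (monomial s c : MvPolynomial (Fin l) ℚ)
        - C c * ∏ j ∈ s.support, (if j = i then (X j - 1 : MvPolynomial (Fin l) ℚ) else X j) ^ s j
        = 0 := by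
      rw [hprod, monomial_eq, Finsupp.prod, sub_self]
    rw [this]
    exact ⟨by simp, fun _ => rfl⟩

lemma pbDelta_totalDegree (i : Fin l) (P : MvPolynomial (Fin l) ℚ) :
    (pbDelta i P).totalDegree ≤ P.totalDegree - 1 := by
  conv_lhs => rw [← support_sum_monomial_coeff P]
  have hexp : pbDelta i (∑ s ∈ P.support, monomial s (coeff s P))
      = ∑ s ∈ P.support, pbDelta i (monomial s (coeff s P)) := by
    unfold pbDelta
    rw [map_sum, ← Finset.sum_sub_distrib]
  rw [hexp]
  refine (totalDegree_finset_sum _ _).trans ?_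
  refine Finset.sup_le fun s hs => ?_
  refine ((pbDelta_monomial i s (coeff s P)).1).trans ?_
  have := le_totalDegree hs
  omega

lemma pbDelta_eq_zero_of_totalDegree_eq_zero (i : Fin l) (P : MvPolynomial (Fin l) ℚ)
    (h : P.totalDegree = 0) : pbDelta i P = 0 := by
  conv_lhs => rw [← support_sum_monomial_coeff P]
  have hexp : pbDelta i (∑ s ∈ P.support, monomial s (coeff s P))
      = ∑ s ∈ P.support, pbDelta i (monomial s (coeff s P)) := by
    unfold pbDelta
    rw [map_sum, ← Finset.sum_sub_distrib]
  rw [hexp]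
  refine Finset.sum_eq_zero fun s hs => ?_
  refine (pbDelta_monomial i s (coeff s P)).2 ?_
  exact (totalDegree_eq_zero_iff (Fin l) P).mp h s hs i

/-- The main induction. -/
lemma pointed_box_aux (l : ℕ) : ∀ n : ℕ, ∀ P : MvPolynomial (Fin l) ℚ, ∀ m : Fin l → ℤ,
    (∀ i, 0 < m i) → (∑ i, (m i - 1)) = (n : ℤ) →
    MvPolynomial.eval (fun i => (-(m i) : ℚ)) P ≠ 0 →
    (∀ k : Fin l → ℤ, (∀ i, 0 < k i ∧ k i ≤ m i) →
      (∑ i, k i) < (∑ i, m i) →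
      MvPolynomial.eval (fun i => (-(k i) : ℚ)) P = 0) →
    (n : ℤ) ≤ (P.totalDegree : ℤ) := by
  intro n
  induction n with
  | zero => intro P m _ _ _ _; exact_mod_cast Nat.zero_le _
  | succ n ih =>
    intro P m hm hsum hPm hbox
    -- find an index with m i ≥ 2
    have hex : ∃ i, 2 ≤ m i := by
      by_contra h
      push_neg at h
      have : ∑ i, (m i - 1) ≤ 0 := Finset.sum_nonpos fun i _ => by
        have := h i; omega
      omega
    obtain ⟨i, hi⟩ := hex
    set m' : Fin l → ℤ := Function.update m i (m i - 1) with hm'def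
    have hm'_apply : ∀ j, m' j = if j = i then m i - 1 else m j := by
      intro j; simp [hm'def, Function.update_apply]
    have hm'pos : ∀ j, 0 < m' j := by
      intro j; rw [hm'_apply]; split
      · omega
      · exact hm j
    have hm'sum : ∑ j, m' j = (∑ j, m j) - 1 := by
      rw [hm'def, Finset.sum_update_of_mem (Finset.mem_univ i), ← Finset.erase_eq,
        ← Finset.add_sum_erase _ _ (Finset.mem_univ i)]
      ring
    set Q := pbDelta i P with hQdef
    -- evaluation of Q at -m'
    have hk_m' : ∀ j, 0 < m' j ∧ m' j ≤ m j := by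
      intro j; rw [hm'_apply]
      by_cases h : j = i
      · subst h; rw [if_pos rfl]; constructor <;> omega
      · rw [if_neg h]; exact ⟨hm j, le_refl _⟩
    have hPm' : MvPolynomial.eval (fun j => (-(m' j) : ℚ)) P = 0 :=
      hbox m' hk_m' (by omega)
    have hupdate : Function.update (fun j => (-(m' j) : ℚ)) i ((-(m' i) : ℚ) - 1)
        = fun j => (-(m j) : ℚ) := by
      funext j
      rw [Function.update_apply]
      by_cases h : j = i
      · subst h
        rw [if_pos rfl, hm'_apply]
        simp only [if_pos rfl]
        push_cast
        ring
      · rw [if_neg h, hm'_apply, if_neg h]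
    have hQm' : MvPolynomial.eval (fun j => (-(m' j) : ℚ)) Q ≠ 0 := by
      rw [hQdef, pbDelta_eval, hupdate, hPm', zero_sub, neg_ne_zero]
      exact hPm
    -- box hypothesis for Q
    have hQbox : ∀ k : Fin l → ℤ, (∀ j, 0 < k j ∧ k j ≤ m' j) →
        (∑ j, k j) < (∑ j, m' j) →
        MvPolynomial.eval (fun j => (-(k j) : ℚ)) Q = 0 := by
      intro k hk hks
      rw [hQdef, pbDelta_eval]
      set k' : Fin l → ℤ := Function.update k i (k i + 1) with hk'def
      have hk'_apply : ∀ j, k' j = if j = i then k i + 1 else k j := by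
        intro j; simp [hk'def, Function.update_apply]
      have hupd2 : Function.update (fun j => (-(k j) : ℚ)) i ((-(k i) : ℚ) - 1)
          = fun j => (-(k' j) : ℚ) := by
        funext j
        rw [Function.update_apply]
        by_cases h : j = i
        · subst h
          rw [if_pos rfl, hk'_apply]
          simp only [if_pos rfl]
          push_cast
          ring
        · rw [if_neg h, hk'_apply, if_neg h]
      rw [hupd2]
      have h1 : MvPolynomial.eval (fun j => (-(k j) : ℚ)) P = 0 := by
        refine hbox k (fun j => ⟨(hk j).1, (hk j).2.trans (hk_m' j).2⟩) ?_
        omega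
      have hk'sum : ∑ j, k' j = (∑ j, k j) + 1 := by
        rw [hk'def, Finset.sum_update_of_mem (Finset.mem_univ i), ← Finset.erase_eq,
          ← Finset.add_sum_erase _ _ (Finset.mem_univ i)]
        ring
      have h2 : MvPolynomial.eval (fun j => (-(k' j) : ℚ)) P = 0 := by
        refine hbox k' (fun r => ?_) (by omega)
        rw [hk'_apply]
        by_cases h : r = i
        · rw [h, if_pos rfl]
          have hki := (hk i).2
          rw [hm'_apply, if_pos rfl] at hki
          exact ⟨by have := (hk i).1; omega, by omega⟩
        · rw [if_neg h]
          exact ⟨(hk r).1, (hk r).2.trans (hk_m' r).2⟩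
      rw [h1, h2, sub_zero]
    -- apply the induction hypothesis
    have hm'sum' : ∑ j, (m' j - 1) = (n : ℤ) := by
      have : ∑ j, (m' j - 1) = (∑ j, m' j) - l := by
        rw [Finset.sum_sub_distrib]
        simp
      have h2 : ∑ j, (m j - 1) = (∑ j, m j) - l := by
        rw [Finset.sum_sub_distrib]
        simp
      rw [this, hm'sum]
      rw [h2] at hsum
      push_cast at hsum ⊢
      omega
    have hIH := ih Q m' hm'pos hm'sum' hQm' hQbox
    -- conclude
    have hQne : Q ≠ 0 := fun h => hQm' (by rw [h, map_zero])
    have hPdeg : P.totalDegree ≠ 0 := by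
      intro h
      exact hQne (pbDelta_eq_zero_of_totalDegree_eq_zero i P h)
    have hdeg := pbDelta_totalDegree i P
    rw [← hQdef] at hdeg
    have : (n : ℤ) ≤ (Q.totalDegree : ℤ) := hIH
    push_cast
    push_cast at this
    omega

end PointedBoxAux

/-- Let `P ∈ ℚ[z₁,…,z_l]` and let `m₁,…,m_l` be positive
integers.  Assume `P(−m₁,…,−m_l) ≠ 0`, and `P(−k₁,…,−k_l) = 0` for all
integers `k₁,…,k_l` with `0 < k_i ≤ m_i` for every `i` and
`k₁ + ⋯ + k_l < m₁ + ⋯ + m_l`.  Then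
`deg P ≥ (m₁ − 1) + ⋯ + (m_l − 1)`. -/
theorem pointed_box_zeros_neg_totalDegree (l : ℕ) (P : MvPolynomial (Fin l) ℚ)
    (m : Fin l → ℤ) (hm : ∀ i, 0 < m i)
    (hPm : MvPolynomial.eval (fun i => (-(m i) : ℚ)) P ≠ 0)
    (hbox : ∀ k : Fin l → ℤ, (∀ i, 0 < k i ∧ k i ≤ m i) →
      (∑ i, k i) < (∑ i, m i) →
      MvPolynomial.eval (fun i => (-(k i) : ℚ)) P = 0) :
    ∑ i, (m i - 1) ≤ (P.totalDegree : ℤ) := by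
  have hnonneg : 0 ≤ ∑ i, (m i - 1) := Finset.sum_nonneg fun i _ => by
    have := hm i; omega
  obtain ⟨n, hn⟩ := Int.eq_ofNat_of_zero_le hnonneg
  rw [hn]
  exact pointed_box_aux l n P m hm (by rw [← hn]) hPm hbox
end

section
/- Let R be a finite, reduced, crystallographic root system spanning a finite-dimensional real inner product space V, with base S and positive roots R⁺, and let S_P ⊆ S with R_P⁺ the set of positive roots that are nonnegative integer combinations of elements of S_P. Fix β ∈ S∖S_P and an integer j with 1 ≤ j ≤ n_β − 1. Then for every function k : S∖S_P → ℤ with k(β) = −j, one has ∏_{α ∈ R⁺∖R_P⁺} ( ht(α^∨) + Σ_{γ ∈ S∖S_P} k(γ) · c_γ(α^∨) ) = 0. -/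
open scoped RealInnerProductSpace

/-- A finite, reduced, crystallographic root system `R` spanning a
finite-dimensional real inner product space `V`, together with a base `S`
(the simple roots), the corresponding set `Rpos` of positive roots,
the integer coefficients `coeff α γ` of a root `α` in the base `S`,
the integer coefficients `ccoeff α γ` of the coroot `α^∨ = (2/(α,α))•α` of a
positive root in the simple coroots, and the integer Cartan pairings
`cartan α β = ⟨α, β^∨⟩ = 2(α,β)/(β,β)`. -/
structure RootSystemWithBase (V : Type*) [NormedAddCommGroup V]
    [InnerProductSpace ℝ V] [FiniteDimensional ℝ V] where
  R : Finset V
  S : Finset V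
  Rpos : Finset V
  coeff : V → V → ℤ
  ccoeff : V → V → ℤ
  cartan : V → V → ℤ
  root_ne_zero : ∀ α ∈ R, α ≠ (0 : V)
  span_top : Submodule.span ℝ (R : Set V) = ⊤
  neg_mem : ∀ α ∈ R, -α ∈ R
  reduced : ∀ α ∈ R, ∀ c : ℝ, c • α ∈ (R : Set V) → c = 1 ∨ c = -1
  cartan_eq : ∀ α ∈ R, ∀ β ∈ R, (cartan α β : ℝ) = 2 * ⟪α, β⟫ / ⟪β, β⟫
  reflect_mem : ∀ α ∈ R, ∀ β ∈ R, β - cartan β α • α ∈ R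
  S_subset : ∀ γ ∈ S, γ ∈ Rpos
  Rpos_subset : ∀ α ∈ Rpos, α ∈ R
  S_indep : LinearIndependent ℝ (Subtype.val : {x // x ∈ S} → V)
  root_eq_sum : ∀ α ∈ R, α = ∑ γ ∈ S, coeff α γ • γ
  mem_Rpos_iff : ∀ α ∈ R, (α ∈ Rpos ↔ ∀ γ ∈ S, 0 ≤ coeff α γ)
  pos_or_neg : ∀ α ∈ R, α ∈ Rpos ∨ -α ∈ Rpos
  coroot_eq_sum : ∀ α ∈ Rpos,
    (2 / ⟪α, α⟫) • α = ∑ γ ∈ S, ccoeff α γ • ((2 / ⟪γ, γ⟫) • γ)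
  ccoeff_nonneg : ∀ α ∈ Rpos, ∀ γ ∈ S, 0 ≤ ccoeff α γ

namespace RootSystemWithBase

variable {V : Type*} [NormedAddCommGroup V] [InnerProductSpace ℝ V]
  [FiniteDimensional ℝ V] (D : RootSystemWithBase V)

/-- The coroot `α^∨ = 2α/(α,α)` of a root `α`. -/
noncomputable def coroot (_D : RootSystemWithBase V) (α : V) : V := (2 / ⟪α, α⟫) • α

/-- The height of the coroot of a positive root: the sum of its coefficients
in the basis of simple coroots. -/
def ht (α : V) : ℤ := ∑ γ ∈ D.S, D.ccoeff α γ

open Classical in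
/-- `R_P⁺`: the positive roots that are nonnegative integer combinations of
the elements of `SP`. -/
noncomputable def RP (SP : Finset V) : Finset V :=
  D.Rpos.filter fun α => ∃ c : V → ℤ, (∀ γ, 0 ≤ c γ) ∧ α = ∑ γ ∈ SP, c γ • γ

/-- `n_β := 2 - ⟨Σ_{α ∈ R_P⁺} α, β^∨⟩`. -/
noncomputable def n (SP : Finset V) (β : V) : ℤ := 2 - ∑ α ∈ D.RP SP, D.cartan α β

/-- The reflection `s_α` in a root `α`, as a map `V → V`. -/
noncomputable def refl (_D : RootSystemWithBase V) (α : V) (x : V) : V := x - (2 * ⟪x, α⟫ / ⟪α, α⟫) • α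

/-- `w : V → V` can be written as a composition of `t` simple reflections. -/
noncomputable def IsWord (w : V → V) (t : ℕ) : Prop :=
  ∃ b : Fin t → V, (∀ i, b i ∈ D.S) ∧
    w = (List.ofFn fun i => D.refl (b i)).foldr (· ∘ ·) id

/-- Membership in the Weyl group `W` (as a group of maps `V → V`): `w` is a
composition of simple reflections. -/
noncomputable def MemW (w : V → V) : Prop := ∃ t, D.IsWord w t

/-- The length of an element of the Weyl group: the smallest number of simple
reflections needed to express it. -/
noncomputable def len (w : V → V) : ℕ := sInf {t | D.IsWord w t}

/-- The inversion set `I(w) = {α ∈ R⁺ : w(α) ∈ -R⁺}`. -/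
def inversions (w : V → V) : Set V := {α | α ∈ D.Rpos ∧ -(w α) ∈ D.Rpos}

/-- `W^j = {w ∈ W : I(w) ⊆ R⁺ ∖ R_j}`, the minimal length representatives of
`W/W_j`, where `R_j` is the set of roots lying in the span of `S ∖ {β}`. -/
noncomputable def Wj (β : V) : Set (V → V) :=
  {w | D.MemW w ∧
    ∀ α ∈ D.inversions w, α ∉ Submodule.span ℝ ((D.S : Set V) \ {β})}

end RootSystemWithBase

/-!
Put `Q = SP ∪ {β}`, let `ρ_Q` be half the sum of the positive roots of the subsystem spanned
by `Q` and `ϖ` the fundamental weight of `β` in it, so that `ρ_Q = ρ_P + (n_β / 2) ϖ` with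
`ρ_P ⟂ ϖ`. For a root `α` of that subsystem, `⟨ρ_Q - j ϖ, α^∨⟩ = ht(α^∨) - j c_β(α^∨)`, which
is the factor of `α` when `α ∉ R_P⁺` and is `ht(α^∨) ≥ 1` otherwise. So if the product did not
vanish, `λ = ρ_Q - j ϖ` would be integral and regular for the subsystem; reflecting it into the
dominant chamber gives `λ'` with `λ' - ρ_Q` dominant and `‖λ'‖ = ‖λ‖`, whence `‖ρ_Q‖ ≤ ‖λ‖`. But
`‖λ‖² = ‖ρ_Q‖² + j (j - n_β) ‖ϖ‖² < ‖ρ_Q‖²` for `0 < j < n_β`.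
-/

section CorootForm

variable {V : Type*} [NormedAddCommGroup V] [InnerProductSpace ℝ V]

/-- `x ↦ ⟨x, α^∨⟩`. -/
noncomputable def corootForm (α : V) : V →ₗ[ℝ] ℝ := (2 / ⟪α, α⟫) • innerₛₗ ℝ α

lemma corootForm_apply (α x : V) : corootForm α x = 2 * ⟪x, α⟫ / ⟪α, α⟫ := by
  simp only [corootForm, LinearMap.smul_apply, innerₛₗ_apply_apply, smul_eq_mul,
    real_inner_comm α x]
  ring

lemma corootForm_neg (α x : V) : corootForm (-α) x = -corootForm α x := by
  simp only [corootForm_apply, inner_neg_right, inner_neg_left, neg_neg]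
  ring

lemma inner_eq_corootForm_mul {α : V} (hα : α ≠ 0) (x : V) :
    ⟪x, α⟫ = corootForm α x * (⟪α, α⟫ / 2) := by
  rw [corootForm_apply]
  field_simp [inner_self_ne_zero.2 hα]

noncomputable abbrev rootReflection (α : V) : V ≃ₗᵢ[ℝ] V := (ℝ ∙ α)ᗮ.reflection

lemma rootReflection_apply (α x : V) : rootReflection α x = x - corootForm α x • α := by
  rw [Submodule.reflection_orthogonal_apply, Submodule.reflection_singleton_apply,
    corootForm_apply, real_inner_comm, RCLike.ofReal_real_eq_id, id, ← real_inner_self_eq_norm_sq]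
  module

lemma rootReflection_self (α : V) : rootReflection α α = -α :=
  Submodule.reflection_orthogonalComplement_singleton_eq_neg α

lemma rootReflection_rootReflection (α x : V) : rootReflection α (rootReflection α x) = x :=
  Submodule.reflection_reflection _ x

lemma corootForm_rootReflection (α y x : V) :
    corootForm y (rootReflection α x) = corootForm (rootReflection α y) x := by
  have h := (rootReflection α).inner_map_map
  rw [corootForm_apply, corootForm_apply, ← h y y, ← h (rootReflection α x),
    rootReflection_rootReflection]

end CorootForm

section ReflectionInvariantSets

variable {V : Type*} [NormedAddCommGroup V] [InnerProductSpace ℝ V]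
  [DecidableEq V] {γ : V} {t : Finset V}

open Finset

lemma sum_rootReflection_erase (hmaps : Set.MapsTo (rootReflection γ) (t.erase γ) (t.erase γ)) :
    ∑ α ∈ t.erase γ, rootReflection γ α = ∑ α ∈ t.erase γ, α :=
  sum_nbij' (rootReflection γ) (rootReflection γ) hmaps hmaps
    (fun α _ ↦ rootReflection_rootReflection γ α) (fun α _ ↦ rootReflection_rootReflection γ α)
    (fun _ _ ↦ rfl)

/-- If `s_γ` permutes `t ∖ {γ}`, it moves `∑ t` by `-2γ`. -/
lemma corootForm_sum_eq_two (hγ : γ ≠ 0) (hγt : γ ∈ t)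
    (hmaps : Set.MapsTo (rootReflection γ) (t.erase γ) (t.erase γ)) :
    corootForm γ (∑ α ∈ t, α) = 2 := by
  have hrefl : rootReflection γ (∑ α ∈ t, α) = ∑ α ∈ t, α - (2 : ℝ) • γ := by
    rw [map_sum, ← add_sum_erase t _ hγt, sum_rootReflection_erase hmaps, rootReflection_self,
      ← add_sum_erase t (fun α ↦ α) hγt, two_smul]
    abel
  rw [rootReflection_apply, sub_right_inj] at hrefl
  exact smul_left_injective ℝ hγ hrefl

lemma card_filter_corootForm_neg_rootReflection (hγ : γ ≠ 0) (hγt : γ ∈ t)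
    (hmaps : Set.MapsTo (rootReflection γ) (t.erase γ) (t.erase γ)) {x : V}
    (hx : corootForm γ x < 0) :
    #{α ∈ t | corootForm α (rootReflection γ x) < 0} + 1 = #{α ∈ t | corootForm α x < 0} := by
  have hγx : corootForm γ (rootReflection γ x) = -corootForm γ x := by
    rw [corootForm_rootReflection, rootReflection_self, corootForm_neg]
  have hmem : γ ∈ {α ∈ t | corootForm α x < 0} := mem_filter.2 ⟨hγt, hx⟩
  rw [← card_erase_add_one hmem]
  congr 1
  refine card_nbij' (rootReflection γ) (rootReflection γ) ?_ ?_
    (fun α _ ↦ rootReflection_rootReflection γ α) (fun α _ ↦ rootReflection_rootReflection γ α)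
  · intro α hα
    rw [mem_coe, mem_filter] at hα
    have hαγ : α ≠ γ := by rintro rfl; linarith [hα.2]
    have hsα := hmaps (mem_erase.2 ⟨hαγ, hα.1⟩)
    rw [mem_coe, mem_erase] at hsα
    rw [mem_coe, mem_erase, mem_filter, ← corootForm_rootReflection]
    exact ⟨hsα.1, hsα.2, hα.2⟩
  · intro α hα
    rw [mem_coe, mem_erase, mem_filter] at hα
    rw [mem_coe, mem_filter, corootForm_rootReflection, rootReflection_rootReflection]
    exact ⟨(mem_erase.1 (hmaps (mem_erase.2 ⟨hα.1, hα.2.1⟩))).2, hα.2.2⟩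

end ReflectionInvariantSets

lemma norm_sub_smul_lt {V : Type*} [NormedAddCommGroup V] [InnerProductSpace ℝ V]
    {ρ ϖ : V} {a b : ℝ} (hϖ : ϖ ≠ 0) (hρϖ : 2 * ⟪ρ, ϖ⟫ = a * ‖ϖ‖ ^ 2) (hb : 0 < b) (hba : b < a) :
    ‖ρ - b • ϖ‖ < ‖ρ‖ := by
  have hϖpos : 0 < ‖ϖ‖ ^ 2 := by positivity
  have : ‖ρ - b • ϖ‖ ^ 2 < ‖ρ‖ ^ 2 := by
    rw [norm_sub_sq_real, real_inner_smul_right, norm_smul, mul_pow, Real.norm_eq_abs, sq_abs]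
    nlinarith [mul_pos hb (mul_pos (sub_pos.2 hba) hϖpos)]
  exact (pow_lt_pow_iff_left₀ (norm_nonneg _) (norm_nonneg _) two_ne_zero).1 this

namespace RootSystemWithBase

variable {V : Type*} [NormedAddCommGroup V] [InnerProductSpace ℝ V] [FiniteDimensional ℝ V]
  (D : RootSystemWithBase V)

lemma mem_R_of_mem_S {γ : V} (hγ : γ ∈ D.S) : γ ∈ D.R := D.Rpos_subset γ (D.S_subset γ hγ)

lemma ne_zero_of_mem_S {γ : V} (hγ : γ ∈ D.S) : γ ≠ 0 := D.root_ne_zero γ (D.mem_R_of_mem_S hγ)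

lemma ne_zero_of_mem_Rpos {α : V} (hα : α ∈ D.Rpos) : α ≠ 0 :=
  D.root_ne_zero α (D.Rpos_subset α hα)

lemma corootForm_eq_cartan {α γ : V} (hα : α ∈ D.R) (hγ : γ ∈ D.R) :
    corootForm γ α = D.cartan α γ := by
  rw [corootForm_apply, D.cartan_eq α hα γ hγ]

lemma rootReflection_mem_R {γ α : V} (hγ : γ ∈ D.R) (hα : α ∈ D.R) :
    rootReflection γ α ∈ D.R := by
  rw [rootReflection_apply, D.corootForm_eq_cartan hα hγ, Int.cast_smul_eq_zsmul]
  exact D.reflect_mem γ hγ α hα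

lemma root_eq_sum_real {α : V} (hα : α ∈ D.R) : α = ∑ γ ∈ D.S, (D.coeff α γ : ℝ) • γ := by
  simp_rw [Int.cast_smul_eq_zsmul]
  exact D.root_eq_sum α hα

lemma coeff_eq_of_eq_sum {α : V} (hα : α ∈ D.R) {d : V → ℝ} (h : α = ∑ γ ∈ D.S, d γ • γ) :
    ∀ γ ∈ D.S, (D.coeff α γ : ℝ) = d γ :=
  linearIndepOn_finset_iffₛ.1 (show LinearIndepOn ℝ id (D.S : Set V) from D.S_indep) _ _
    ((D.root_eq_sum_real hα).symm.trans h)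

lemma coroot_eq_sum_real {α : V} (hα : α ∈ D.Rpos) :
    (2 / ⟪α, α⟫) • α = ∑ γ ∈ D.S, (D.ccoeff α γ : ℝ) • (2 / ⟪γ, γ⟫) • γ := by
  simp_rw [Int.cast_smul_eq_zsmul]
  exact D.coroot_eq_sum α hα

lemma corootForm_eq_sum_ccoeff {α : V} (hα : α ∈ D.Rpos) (x : V) :
    corootForm α x = ∑ γ ∈ D.S, (D.ccoeff α γ : ℝ) * corootForm γ x := by
  have hform (δ : V) : corootForm δ x = ⟪x, (2 / ⟪δ, δ⟫) • δ⟫ := by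
    rw [corootForm_apply, real_inner_smul_right]
    ring
  simp_rw [hform, D.coroot_eq_sum_real hα, inner_sum, real_inner_smul_right]

lemma coeff_eq_ccoeff_mul {α : V} (hα : α ∈ D.Rpos) {γ : V} (hγ : γ ∈ D.S) :
    (D.coeff α γ : ℝ) = D.ccoeff α γ * (⟪α, α⟫ / ⟪γ, γ⟫) := by
  have hαα : ⟪α, α⟫ ≠ 0 := inner_self_ne_zero.2 (D.ne_zero_of_mem_Rpos hα)
  refine D.coeff_eq_of_eq_sum (D.Rpos_subset α hα)
    (d := fun δ ↦ D.ccoeff α δ * (⟪α, α⟫ / ⟪δ, δ⟫)) ?_ γ hγ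
  calc α = (⟪α, α⟫ / 2) • (2 / ⟪α, α⟫) • α := by
        rw [smul_smul, div_mul_div_cancel₀ two_ne_zero, div_self hαα, one_smul]
    _ = ∑ δ ∈ D.S, (D.ccoeff α δ * (⟪α, α⟫ / ⟪δ, δ⟫)) • δ := by
        rw [D.coroot_eq_sum_real hα, Finset.smul_sum]
        refine Finset.sum_congr rfl fun δ hδ ↦ ?_
        have hδδ : ⟪δ, δ⟫ ≠ 0 := inner_self_ne_zero.2 (D.ne_zero_of_mem_S hδ)
        rw [smul_smul, smul_smul]
        congr 1
        field_simp

lemma ccoeff_eq_zero_iff {α : V} (hα : α ∈ D.Rpos) {γ : V} (hγ : γ ∈ D.S) :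
    D.ccoeff α γ = 0 ↔ D.coeff α γ = 0 := by
  have hratio : ⟪α, α⟫ / ⟪γ, γ⟫ ≠ 0 :=
    div_ne_zero (inner_self_ne_zero.2 (D.ne_zero_of_mem_Rpos hα))
      (inner_self_ne_zero.2 (D.ne_zero_of_mem_S hγ))
  have h := D.coeff_eq_ccoeff_mul hα hγ
  constructor <;> intro h0
  · rw [h0, Int.cast_zero, zero_mul] at h
    exact_mod_cast h
  · rw [h0, Int.cast_zero, eq_comm, mul_eq_zero] at h
    exact_mod_cast h.resolve_right hratio

lemma one_le_ht {α : V} (hα : α ∈ D.Rpos) : 1 ≤ D.ht α := by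
  have hnonneg : ∀ γ ∈ D.S, 0 ≤ D.ccoeff α γ := D.ccoeff_nonneg α hα
  obtain ⟨γ, hγ, hne⟩ : ∃ γ ∈ D.S, D.ccoeff α γ ≠ 0 := by
    by_contra! hzero
    have hcoroot : (2 / ⟪α, α⟫) • α = 0 := by
      rw [D.coroot_eq_sum_real hα]
      exact Finset.sum_eq_zero fun γ hγ ↦ by rw [hzero γ hγ, Int.cast_zero, zero_smul]
    have hαα : ⟪α, α⟫ ≠ 0 := inner_self_ne_zero.2 (D.ne_zero_of_mem_Rpos hα)
    exact D.ne_zero_of_mem_Rpos hα ((smul_eq_zero.1 hcoroot).resolve_left (by positivity))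
  calc 1 ≤ D.ccoeff α γ := by have := hnonneg γ hγ; omega
    _ ≤ D.ht α := Finset.single_le_sum hnonneg hγ

lemma coeff_simple_of_ne {γ δ : V} (hγ : γ ∈ D.S) (hδ : δ ∈ D.S) (hne : δ ≠ γ) :
    D.coeff γ δ = 0 := by
  classical
  have h := D.coeff_eq_of_eq_sum (D.mem_R_of_mem_S hγ) (d := fun δ ↦ if δ = γ then 1 else 0)
    (by simp [ite_smul, Finset.sum_ite_eq', hγ]) δ hδ
  simp only [hne, if_false] at h
  exact_mod_cast h

lemma coeff_rootReflection_of_ne {γ α δ : V} (hγ : γ ∈ D.S) (hα : α ∈ D.R) (hδ : δ ∈ D.S)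
    (hne : δ ≠ γ) : D.coeff (rootReflection γ α) δ = D.coeff α δ := by
  have hγR := D.mem_R_of_mem_S hγ
  have h := D.coeff_eq_of_eq_sum (D.rootReflection_mem_R hγR hα)
    (d := fun δ ↦ D.coeff α δ - D.cartan α γ * D.coeff γ δ) (by
      simp_rw [sub_smul, Finset.sum_sub_distrib, mul_smul, ← Finset.smul_sum,
        ← D.root_eq_sum_real hα, ← D.root_eq_sum_real hγR, rootReflection_apply,
        D.corootForm_eq_cartan hα hγR]) δ hδ
  rw [D.coeff_simple_of_ne hγ hδ hne, Int.cast_zero, mul_zero, sub_zero] at h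
  exact_mod_cast h

lemma coeff_neg {α γ : V} (hα : α ∈ D.R) (hγ : γ ∈ D.S) : D.coeff (-α) γ = -D.coeff α γ := by
  have h := D.coeff_eq_of_eq_sum (D.neg_mem α hα) (d := fun γ ↦ -(D.coeff α γ : ℝ))
    (by simp_rw [neg_smul, Finset.sum_neg_distrib, ← D.root_eq_sum_real hα]) γ hγ
  exact_mod_cast h

lemma neg_notMem_Rpos {α : V} (hα : α ∈ D.Rpos) : -α ∉ D.Rpos := by
  intro hneg
  have hαR := D.Rpos_subset α hα
  have hzero : ∀ γ ∈ D.S, D.coeff α γ = 0 := by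
    intro γ hγ
    have h1 := (D.mem_Rpos_iff α hαR).1 hα γ hγ
    have h2 := (D.mem_Rpos_iff _ (D.neg_mem α hαR)).1 hneg γ hγ
    rw [D.coeff_neg hαR hγ] at h2
    omega
  apply D.ne_zero_of_mem_Rpos hα
  rw [D.root_eq_sum_real hαR]
  exact Finset.sum_eq_zero fun γ hγ ↦ by rw [hzero γ hγ, Int.cast_zero, zero_smul]

lemma mem_Rpos_of_coeff_pos {α δ : V} (hα : α ∈ D.R) (hδ : δ ∈ D.S) (hpos : 0 < D.coeff α δ) :
    α ∈ D.Rpos := by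
  refine (D.pos_or_neg α hα).resolve_right fun hneg ↦ ?_
  have hnonneg := (D.mem_Rpos_iff _ (D.neg_mem α hα)).1 hneg δ hδ
  rw [D.coeff_neg hα hδ] at hnonneg
  omega

lemma eq_of_coeff_eq_zero {γ α : V} (hγ : γ ∈ D.S) (hα : α ∈ D.Rpos)
    (hzero : ∀ δ ∈ D.S, δ ≠ γ → D.coeff α δ = 0) : α = γ := by
  have hαR := D.Rpos_subset α hα
  have hexp : α = (D.coeff α γ : ℝ) • γ := by
    conv_lhs => rw [D.root_eq_sum_real hαR]
    exact Finset.sum_eq_single_of_mem γ hγ fun δ hδ hne ↦ by rw [hzero δ hδ hne, Int.cast_zero,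
      zero_smul]
  have hmem : (D.coeff α γ : ℝ) • γ ∈ (D.R : Set V) := hexp ▸ hαR
  have hnonneg : (0 : ℝ) ≤ D.coeff α γ := by exact_mod_cast (D.mem_Rpos_iff α hαR).1 hα γ hγ
  rcases D.reduced γ (D.mem_R_of_mem_S hγ) _ hmem with h | h
  · rw [hexp, h, one_smul]
  · linarith

lemma mapsTo_rootReflection_Rpos_erase {γ : V} [DecidableEq V] (hγ : γ ∈ D.S) :
    Set.MapsTo (rootReflection γ) (D.Rpos.erase γ) (D.Rpos.erase γ) := by
  intro α hα
  rw [Finset.mem_coe, Finset.mem_erase] at hα ⊢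
  obtain ⟨hne, hαpos⟩ := hα
  have hαR := D.Rpos_subset α hαpos
  obtain ⟨δ, hδ, hδγ, hδpos⟩ : ∃ δ ∈ D.S, δ ≠ γ ∧ 0 < D.coeff α δ := by
    by_contra! hle
    exact hne (D.eq_of_coeff_eq_zero hγ hαpos fun δ hδ hδγ ↦
      le_antisymm (hle δ hδ hδγ) ((D.mem_Rpos_iff α hαR).1 hαpos δ hδ))
  refine ⟨fun heq ↦ ?_, D.mem_Rpos_of_coeff_pos (D.rootReflection_mem_R (D.mem_R_of_mem_S hγ) hαR)
    hδ (by rwa [D.coeff_rootReflection_of_ne hγ hαR hδ hδγ])⟩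
  have hαneg : α = -γ := by
    rw [← rootReflection_rootReflection γ α, heq]
    exact rootReflection_self γ
  exact D.neg_notMem_Rpos (D.S_subset γ hγ) (hαneg ▸ hαpos)

section Levi

variable {Q : Finset V}

open Classical in
noncomputable def leviRoots (Q : Finset V) : Finset V :=
  D.Rpos.filter fun α ↦ ∀ γ ∈ D.S, γ ∉ Q → D.coeff α γ = 0

variable {D}

lemma mem_leviRoots {α : V} :
    α ∈ D.leviRoots Q ↔ α ∈ D.Rpos ∧ ∀ γ ∈ D.S, γ ∉ Q → D.coeff α γ = 0 := by
  classical
  simp only [leviRoots, Finset.mem_filter]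

lemma RP_eq_leviRoots {SP : Finset V} (hSP : SP ⊆ D.S) : D.RP SP = D.leviRoots SP := by
  classical
  ext α
  simp only [RP, Finset.mem_filter, mem_leviRoots, and_congr_right_iff]
  intro hα
  have hαR := D.Rpos_subset α hα
  constructor
  · rintro ⟨c, -, hc⟩ γ hγ hγP
    have h := D.coeff_eq_of_eq_sum hαR (d := fun γ ↦ if γ ∈ SP then (c γ : ℝ) else 0) (by
      rw [hc, ← Finset.sum_subset hSP fun γ _ hγP ↦ by rw [if_neg hγP, zero_smul]]
      exact Finset.sum_congr rfl fun γ hγ ↦ by rw [if_pos hγ, Int.cast_smul_eq_zsmul]) γ hγ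
    rw [if_neg hγP] at h
    exact_mod_cast h
  · intro hzero
    refine ⟨fun γ ↦ if γ ∈ D.S then D.coeff α γ else 0, fun γ ↦ ?_, ?_⟩
    · dsimp only
      split_ifs with hγ
      exacts [(D.mem_Rpos_iff α hαR).1 hα γ hγ, le_rfl]
    · conv_lhs => rw [D.root_eq_sum α hαR]
      rw [← Finset.sum_subset hSP fun γ hγ hγP ↦ by rw [hzero γ hγ hγP, zero_smul]]
      exact Finset.sum_congr rfl fun γ hγ ↦ by dsimp only; rw [if_pos (hSP hγ)]

lemma ccoeff_eq_zero_of_mem_leviRoots {α γ : V} (hα : α ∈ D.leviRoots Q) (hγ : γ ∈ D.S)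
    (hγQ : γ ∉ Q) : D.ccoeff α γ = 0 :=
  (D.ccoeff_eq_zero_iff (mem_leviRoots.1 hα).1 hγ).2 ((mem_leviRoots.1 hα).2 γ hγ hγQ)

lemma corootForm_eq_sum_of_mem_leviRoots (hQ : Q ⊆ D.S) {α : V} (hα : α ∈ D.leviRoots Q)
    (x : V) : corootForm α x = ∑ γ ∈ Q, (D.ccoeff α γ : ℝ) * corootForm γ x := by
  rw [D.corootForm_eq_sum_ccoeff (mem_leviRoots.1 hα).1]
  exact (Finset.sum_subset hQ fun γ hγ hγQ ↦ by
    rw [ccoeff_eq_zero_of_mem_leviRoots hα hγ hγQ, Int.cast_zero, zero_mul]).symm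

lemma ht_eq_sum_of_mem_leviRoots (hQ : Q ⊆ D.S) {α : V} (hα : α ∈ D.leviRoots Q) :
    D.ht α = ∑ γ ∈ Q, D.ccoeff α γ :=
  (Finset.sum_subset hQ fun _ hγ hγQ ↦ ccoeff_eq_zero_of_mem_leviRoots hα hγ hγQ).symm

lemma simple_mem_leviRoots (hQ : Q ⊆ D.S) {γ : V} (hγ : γ ∈ Q) : γ ∈ D.leviRoots Q :=
  mem_leviRoots.2 ⟨D.S_subset γ (hQ hγ), fun _ hδ hδQ ↦
    D.coeff_simple_of_ne (hQ hγ) hδ fun h ↦ hδQ (h ▸ hγ)⟩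

lemma mapsTo_rootReflection_leviRoots_erase [DecidableEq V] (hQ : Q ⊆ D.S) {γ : V}
    (hγ : γ ∈ Q) :
    Set.MapsTo (rootReflection γ) ((D.leviRoots Q).erase γ) ((D.leviRoots Q).erase γ) := by
  intro α hα
  rw [Finset.mem_coe, Finset.mem_erase, mem_leviRoots] at hα
  obtain ⟨hne, hαpos, hzero⟩ := hα
  have hpos := D.mapsTo_rootReflection_Rpos_erase (hQ hγ) (Finset.mem_erase.2 ⟨hne, hαpos⟩)
  rw [Finset.mem_coe, Finset.mem_erase] at hpos ⊢
  refine ⟨hpos.1, mem_leviRoots.2 ⟨hpos.2, fun δ hδ hδQ ↦ ?_⟩⟩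
  rw [D.coeff_rootReflection_of_ne (hQ hγ) (D.Rpos_subset α hαpos) hδ fun h ↦ hδQ (h ▸ hγ)]
  exact hzero δ hδ hδQ

variable (D) in
noncomputable def rho (Q : Finset V) : V := (1 / 2 : ℝ) • ∑ α ∈ D.leviRoots Q, α

lemma corootForm_rho (hQ : Q ⊆ D.S) {γ : V} (hγ : γ ∈ Q) : corootForm γ (D.rho Q) = 1 := by
  classical
  rw [rho, map_smul, corootForm_sum_eq_two (D.ne_zero_of_mem_S (hQ hγ))
    (simple_mem_leviRoots hQ hγ) (mapsTo_rootReflection_leviRoots_erase hQ hγ), smul_eq_mul]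
  norm_num

lemma corootForm_rho_eq_one_sub_n {SP : Finset V} (hSP : SP ⊆ D.S) {β : V} (hβS : β ∈ D.S) :
    corootForm β (D.rho SP) = 1 - D.n SP β / 2 := by
  have hβR := D.mem_R_of_mem_S hβS
  have hsum : ∑ α ∈ D.leviRoots SP, corootForm β α = 2 - D.n SP β := by
    rw [Finset.sum_congr rfl fun α hα ↦
      D.corootForm_eq_cartan (D.Rpos_subset α (mem_leviRoots.1 hα).1) hβR, n,
      RP_eq_leviRoots hSP]
    push_cast
    ring
  rw [rho, map_smul, map_sum, hsum, smul_eq_mul]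
  ring

/-- `x - ρ` is dominant, so it pairs nonnegatively with every positive root, hence with `ρ`. -/
lemma norm_rho_le_of_dominant (hQ : Q ⊆ D.S) {x : V} (hx : ∀ γ ∈ Q, 1 ≤ corootForm γ x) :
    ‖D.rho Q‖ ≤ ‖x‖ := by
  have hdom : ∀ α ∈ D.leviRoots Q, 0 ≤ ⟪α, x - D.rho Q⟫ := by
    intro α hα
    have hαpos := (mem_leviRoots.1 hα).1
    rw [real_inner_comm, inner_eq_corootForm_mul (D.ne_zero_of_mem_Rpos hαpos),
      corootForm_eq_sum_of_mem_leviRoots hQ hα]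
    refine mul_nonneg (Finset.sum_nonneg fun γ hγ ↦ mul_nonneg ?_ ?_)
      (div_nonneg real_inner_self_nonneg zero_le_two)
    · exact_mod_cast D.ccoeff_nonneg α hαpos γ (hQ hγ)
    · rw [map_sub, corootForm_rho hQ hγ]
      linarith [hx γ hγ]
  have hρ : 0 ≤ ⟪D.rho Q, x - D.rho Q⟫ := by
    rw [rho, real_inner_smul_left, sum_inner]
    exact mul_nonneg (by norm_num) (Finset.sum_nonneg hdom)
  have hsq : ‖D.rho Q‖ ^ 2 ≤ ‖x‖ ^ 2 := by
    have := norm_add_sq_real (D.rho Q) (x - D.rho Q)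
    rw [add_sub_cancel] at this
    nlinarith [sq_nonneg ‖x - D.rho Q‖]
  exact (pow_le_pow_iff_left₀ (norm_nonneg _) (norm_nonneg _) two_ne_zero).1 hsq

/-- Induction on the number of positive roots pairing negatively with `x`: reflecting in a
simple root `γ` with `⟨x, γ^∨⟩ < 0` lowers it by one and preserves the norm and the hypothesis;
if there is no such `γ`, integrality makes `x - ρ` dominant. -/
lemma norm_rho_le (hQ : Q ⊆ D.S) {x : V}
    (hx : ∀ α ∈ D.leviRoots Q, ∃ m : ℤ, m ≠ 0 ∧ corootForm α x = m) : ‖D.rho Q‖ ≤ ‖x‖ := by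
  classical
  induction hN : Finset.card {α ∈ D.leviRoots Q | corootForm α x < 0} using Nat.strong_induction_on
    generalizing x with
  | _ N ih =>
  by_cases hdom : ∀ γ ∈ Q, 0 ≤ corootForm γ x
  · refine norm_rho_le_of_dominant hQ fun γ hγ ↦ ?_
    obtain ⟨m, hm0, hm⟩ := hx γ (simple_mem_leviRoots hQ hγ)
    have hm_nonneg := hdom γ hγ
    rw [hm] at hm_nonneg ⊢
    have : 0 ≤ m := by exact_mod_cast hm_nonneg
    exact_mod_cast (show 1 ≤ m by omega)
  push Not at hdom
  obtain ⟨γ, hγ, hneg⟩ := hdom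
  have hmaps := mapsTo_rootReflection_leviRoots_erase hQ hγ
  have hcard := card_filter_corootForm_neg_rootReflection (D.ne_zero_of_mem_S (hQ hγ))
    (simple_mem_leviRoots hQ hγ) hmaps hneg
  rw [← (rootReflection γ).norm_map x]
  refine ih _ (by omega) (fun α hα ↦ ?_) rfl
  rw [corootForm_rootReflection]
  by_cases hαγ : α = γ
  · obtain ⟨m, hm0, hm⟩ := hx α hα
    refine ⟨-m, neg_ne_zero.2 hm0, ?_⟩
    rw [hαγ, rootReflection_self, corootForm_neg, ← hαγ, hm, Int.cast_neg]
  · exact hx _ (Finset.mem_of_mem_erase (hmaps (Finset.mem_erase.2 ⟨hαγ, hα⟩)))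

end Levi

section FundamentalWeight

variable [DecidableEq V] {SP : Finset V} {β : V}

/-- The fundamental weight `ϖ_β` of the subsystem on `insert β SP`, normalized through
`2 (ρ_{insert β SP} - ρ_{SP}) = n_β ϖ_β`. -/
noncomputable def fundWeight (SP : Finset V) (β : V) : V :=
  (2 / (D.n SP β : ℝ)) • (D.rho (insert β SP) - D.rho SP)

variable {D}

lemma corootForm_fundWeight_of_mem (hSP : SP ⊆ D.S) (hβS : β ∈ D.S) {γ : V} (hγ : γ ∈ SP) :
    corootForm γ (D.fundWeight SP β) = 0 := by
  rw [fundWeight, map_smul, map_sub, corootForm_rho (Finset.insert_subset hβS hSP)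
    (Finset.mem_insert_of_mem hγ), corootForm_rho hSP hγ, sub_self, smul_zero]

lemma corootForm_fundWeight_self (hSP : SP ⊆ D.S) (hβS : β ∈ D.S) (hn : D.n SP β ≠ 0) :
    corootForm β (D.fundWeight SP β) = 1 := by
  rw [fundWeight, map_smul, map_sub, corootForm_rho (Finset.insert_subset hβS hSP)
    (Finset.mem_insert_self β SP), corootForm_rho_eq_one_sub_n hSP hβS, smul_eq_mul]
  field_simp
  ring

lemma inner_rho_fundWeight (hSP : SP ⊆ D.S) (hβS : β ∈ D.S) :
    ⟪D.rho SP, D.fundWeight SP β⟫ = 0 := by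
  rw [rho, real_inner_smul_left, sum_inner]
  refine mul_eq_zero_of_right _ (Finset.sum_eq_zero fun α hα ↦ ?_)
  have hα0 := D.ne_zero_of_mem_Rpos (mem_leviRoots.1 hα).1
  have hform : corootForm α (D.fundWeight SP β) = 0 := by
    rw [corootForm_eq_sum_of_mem_leviRoots hSP hα]
    exact Finset.sum_eq_zero fun γ hγ ↦ by rw [corootForm_fundWeight_of_mem hSP hβS hγ, mul_zero]
  rw [real_inner_comm, inner_eq_corootForm_mul hα0, hform, zero_mul]

lemma two_mul_inner_rho_fundWeight (hSP : SP ⊆ D.S) (hβS : β ∈ D.S) (hn : D.n SP β ≠ 0) :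
    2 * ⟪D.rho (insert β SP), D.fundWeight SP β⟫ = D.n SP β * ‖D.fundWeight SP β‖ ^ 2 := by
  have hρ : D.rho (insert β SP) = D.rho SP + (D.n SP β / 2 : ℝ) • D.fundWeight SP β := by
    have hn' : (D.n SP β : ℝ) ≠ 0 := by exact_mod_cast hn
    rw [fundWeight, smul_smul, show (D.n SP β / 2 : ℝ) * (2 / D.n SP β) = 1 by field_simp,
      one_smul, add_sub_cancel]
  rw [hρ, inner_add_left, inner_rho_fundWeight hSP hβS, real_inner_smul_left,
    real_inner_self_eq_norm_sq]
  ring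

lemma corootForm_rho_sub_smul_fundWeight (hSP : SP ⊆ D.S) (hβS : β ∈ D.S) (hβP : β ∉ SP)
    (hn : D.n SP β ≠ 0) (c : ℝ) {α : V}
    (hα : α ∈ D.leviRoots (insert β SP)) :
    corootForm α (D.rho (insert β SP) - c • D.fundWeight SP β) = D.ht α - c * D.ccoeff α β := by
  have hQ := Finset.insert_subset hβS hSP
  have hform : ∀ γ ∈ SP, corootForm γ (D.rho (insert β SP) - c • D.fundWeight SP β) = 1 := by
    intro γ hγ
    rw [map_sub, map_smul, corootForm_rho hQ (Finset.mem_insert_of_mem hγ),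
      corootForm_fundWeight_of_mem hSP hβS hγ, smul_zero, sub_zero]
  rw [corootForm_eq_sum_of_mem_leviRoots hQ hα, ht_eq_sum_of_mem_leviRoots hQ hα,
    Finset.sum_insert hβP, Finset.sum_insert hβP,
    Finset.sum_congr rfl fun γ hγ ↦ by rw [hform γ hγ, mul_one], map_sub, map_smul,
    corootForm_rho hQ (Finset.mem_insert_self β SP), corootForm_fundWeight_self hSP hβS hn]
  push_cast
  ring

lemma sum_sdiff_mul_ccoeff_of_mem_leviRoots (hβS : β ∈ D.S) (hβP : β ∉ SP) (k : V → ℤ) {α : V}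
    (hα : α ∈ D.leviRoots (insert β SP)) :
    ∑ γ ∈ D.S \ SP, k γ * D.ccoeff α γ = k β * D.ccoeff α β := by
  refine Finset.sum_eq_single_of_mem β (Finset.mem_sdiff.2 ⟨hβS, hβP⟩) fun γ hγ hγβ ↦ ?_
  obtain ⟨hγS, hγP⟩ := Finset.mem_sdiff.1 hγ
  rw [ccoeff_eq_zero_of_mem_leviRoots hα hγS (by simp [hγβ, hγP]), mul_zero]

/-- For `α ∈ R_P⁺` this is `ht(α^∨) ≥ 1`; otherwise it is the factor of `α` in the product. -/
lemma ht_sub_mul_ccoeff_ne_zero (hSP : SP ⊆ D.S) (hβS : β ∈ D.S) (hβP : β ∉ SP) {k : V → ℤ}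
    {j : ℤ} (hk : k β = -j)
    (hprod : ∏ α ∈ D.Rpos \ D.RP SP, (D.ht α + ∑ γ ∈ D.S \ SP, k γ * D.ccoeff α γ) ≠ 0)
    {α : V} (hα : α ∈ D.leviRoots (insert β SP)) : D.ht α - j * D.ccoeff α β ≠ 0 := by
  have hαpos := (mem_leviRoots.1 hα).1
  by_cases hαP : α ∈ D.leviRoots SP
  · rw [ccoeff_eq_zero_of_mem_leviRoots hαP hβS hβP, mul_zero, sub_zero]
    have := D.one_le_ht hαpos
    omega
  have hfactor := Finset.prod_ne_zero_iff.1 hprod α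
    (by rw [RP_eq_leviRoots hSP]; exact Finset.mem_sdiff.2 ⟨hαpos, hαP⟩)
  rwa [sum_sdiff_mul_ccoeff_of_mem_leviRoots hβS hβP k hα, hk, neg_mul, ← sub_eq_add_neg]
    at hfactor

end FundamentalWeight

end RootSystemWithBase

/-- Fix `β ∈ S ∖ S_P` and an integer `j` with
`1 ≤ j ≤ n_β − 1`.  Then for every function `k : S ∖ S_P → ℤ` with
`k(β) = −j`, one has
`∏_{α ∈ R⁺∖R_P⁺} ( ht(α^∨) + Σ_{γ ∈ S∖S_P} k(γ)·c_γ(α^∨) ) = 0`. -/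
theorem hilbert_polynomial_vanishes {V : Type*} [NormedAddCommGroup V]
    [InnerProductSpace ℝ V] [FiniteDimensional ℝ V] [DecidableEq V]
    (D : RootSystemWithBase V)
    (SP : Finset V) (hSP : SP ⊆ D.S) (β : V) (hβS : β ∈ D.S) (hβP : β ∉ SP)
    (j : ℤ) (hj1 : 1 ≤ j) (hj2 : j ≤ D.n SP β - 1)
    (k : V → ℤ) (hk : k β = -j) :
    ∏ α ∈ D.Rpos \ D.RP SP,
      (D.ht α + ∑ γ ∈ D.S \ SP, k γ * D.ccoeff α γ) = 0 := by
  open RootSystemWithBase in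
  by_contra! hprod
  have hQ : insert β SP ⊆ D.S := Finset.insert_subset hβS hSP
  have hn : D.n SP β ≠ 0 := by omega
  have hϖ : D.fundWeight SP β ≠ 0 := fun h ↦ by
    simpa [h] using corootForm_fundWeight_self hSP hβS hn
  have hnorm_le : ‖D.rho (insert β SP)‖ ≤ ‖D.rho (insert β SP) - (j : ℝ) • D.fundWeight SP β‖ :=
    norm_rho_le hQ fun α hα ↦ ⟨_, ht_sub_mul_ccoeff_ne_zero hSP hβS hβP hk hprod hα, by
      rw [corootForm_rho_sub_smul_fundWeight hSP hβS hβP hn (j : ℝ) hα]; push_cast; ring⟩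
  have hnorm_lt : ‖D.rho (insert β SP) - (j : ℝ) • D.fundWeight SP β‖ < ‖D.rho (insert β SP)‖ :=
    norm_sub_smul_lt hϖ (two_mul_inner_rho_fundWeight hSP hβS hn) (by exact_mod_cast hj1)
      (by exact_mod_cast (by omega : j < D.n SP β))
  exact hnorm_lt.not_ge hnorm_le
end

section
/- Let R be a finite, reduced, crystallographic root system spanning a finite-dimensional real inner product space V, with base S and positive roots R⁺, and let S_P ⊆ S with R_P⁺ the set of positive roots that are nonnegative integer combinations of elements of S_P. Fix β ∈ S∖S_P and suppose β^∨ = β^∨ + γ_0, β^∨ + γ_1, …, β^∨ + γ_l (with γ_0 = 0) is a good string of coroots for S_P and β: each β^∨ + γ_j is the coroot of a positive root, each γ_j is a nonnegative integer combination of the coroots of elements of S_P, and ht(β^∨ + γ_j) = j + 1 for every 0 ≤ j ≤ l. Then for every j ∈ {0, 1, …, l} and every function k : S∖S_P → ℤ with k(β) = −(j+1), one has ∏_{α ∈ R⁺∖R_P⁺} ( ht(α^∨) + Σ_{γ ∈ S∖S_P} k(γ) · c_γ(α^∨) ) = 0. -/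
open scoped RealInnerProductSpace

/-- Fix `β ∈ S ∖ S_P` and a good string of coroots
`β^∨ = β^∨ + γ₀, β^∨ + γ₁, …, β^∨ + γ_l` (with `γ₀ = 0`) for `S_P` and `β`:
each `β^∨ + γ_j` is the coroot of a positive root `a j`, each `γ_j` is a
nonnegative integer combination of the coroots of elements of `S_P`, and
`ht(β^∨ + γ_j) = j + 1` for every `0 ≤ j ≤ l`.  Then for every
`j ∈ {0, …, l}` and every `k : S∖S_P → ℤ` with `k(β) = −(j+1)`, one has
`∏_{α ∈ R⁺∖R_P⁺} ( ht(α^∨) + Σ_{γ ∈ S∖S_P} k(γ)·c_γ(α^∨) ) = 0`. -/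
theorem hilbert_polynomial_vanishes_of_good_string {V : Type*}
    [NormedAddCommGroup V] [InnerProductSpace ℝ V] [FiniteDimensional ℝ V]
    [DecidableEq V] (D : RootSystemWithBase V)
    (SP : Finset V) (hSP : SP ⊆ D.S) (β : V) (hβS : β ∈ D.S) (hβP : β ∉ SP)
    (l : ℕ) (a : ℕ → V) (c : ℕ → V → ℤ)
    (ha0 : a 0 = β)
    (hc0 : ∀ δ, c 0 δ = 0)
    (hmem : ∀ j ≤ l, a j ∈ D.Rpos)
    (hcnonneg : ∀ j ≤ l, ∀ δ, 0 ≤ c j δ)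
    (hform : ∀ j ≤ l, D.coroot (a j) = D.coroot β + ∑ δ ∈ SP, c j δ • D.coroot δ)
    (hht : ∀ j ≤ l, D.ht (a j) = (j : ℤ) + 1) :
    ∀ j ≤ l, ∀ k : V → ℤ, k β = -((j : ℤ) + 1) →
      ∏ α ∈ D.Rpos \ D.RP SP,
        (D.ht α + ∑ γ ∈ D.S \ SP, k γ * D.ccoeff α γ) = 0 := by
  classical
  intro j hj k hk
  have hinner : ∀ γ ∈ D.S, ⟪γ, γ⟫ ≠ (0 : ℝ) := fun γ hγ => by
    simpa [inner_self_eq_zero] using D.root_ne_zero γ (D.Rpos_subset γ (D.S_subset γ hγ))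
  set d : V → ℝ := fun γ =>
    (if γ = β then (1 : ℝ) else 0) + (if γ ∈ SP then (c j γ : ℝ) else 0) with hd
  -- express RHS of hform as a sum over S with coefficients d
  have hzsmul : ∀ (n : ℤ) (x : V), n • x = (n : ℝ) • x := fun n x =>
    (Int.cast_smul_eq_zsmul ℝ n x).symm
  have hrhs : D.coroot β + ∑ δ ∈ SP, c j δ • D.coroot δ
      = ∑ γ ∈ D.S, d γ • D.coroot γ := by
    have h1 : D.coroot β = ∑ γ ∈ D.S, (if γ = β then (1 : ℝ) else 0) • D.coroot γ := by
      simp only [ite_smul, one_smul, zero_smul]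
      rw [Finset.sum_ite_eq' D.S β D.coroot]
      simp [hβS]
    have h2 : ∑ δ ∈ SP, c j δ • D.coroot δ
        = ∑ γ ∈ D.S, (if γ ∈ SP then (c j γ : ℝ) else 0) • D.coroot γ := by
      rw [← Finset.sum_subset hSP (by intro x _ hx; simp [hx])]
      apply Finset.sum_congr rfl
      intro x hx
      simp [hx, hzsmul]
    rw [h1, h2, ← Finset.sum_add_distrib]
    apply Finset.sum_congr rfl
    intro x _
    rw [hd, add_smul]
  have hlhs : D.coroot (a j) = ∑ γ ∈ D.S, (D.ccoeff (a j) γ : ℝ) • D.coroot γ := by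
    have := D.coroot_eq_sum (a j) (hmem j hj)
    rw [RootSystemWithBase.coroot, this]
    apply Finset.sum_congr rfl
    intro x _
    rw [hzsmul]
    rfl
  have hsum0 : ∑ γ ∈ D.S, (((D.ccoeff (a j) γ : ℝ) - d γ) * (2 / ⟪γ, γ⟫)) • γ = 0 := by
    have h := hform j hj
    rw [hlhs, hrhs] at h
    have h' : ∑ γ ∈ D.S, ((D.ccoeff (a j) γ : ℝ) - d γ) • D.coroot γ = 0 := by
      rw [← sub_eq_zero] at h
      rw [← h, ← Finset.sum_sub_distrib]
      apply Finset.sum_congr rfl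
      intro x _
      rw [sub_smul]
    rw [← h']
    apply Finset.sum_congr rfl
    intro x _
    rw [RootSystemWithBase.coroot, smul_smul]
  -- coefficients vanish by linear independence
  have hcoef : ∀ γ ∈ D.S, (D.ccoeff (a j) γ : ℝ) = d γ := by
    intro γ hγ
    have hli := Fintype.linearIndependent_iff.mp D.S_indep
    have hconv : ∑ i : {x // x ∈ D.S},
        (((D.ccoeff (a j) (i : V) : ℝ) - d i) * (2 / ⟪(i : V), (i : V)⟫)) • (i : V) = 0 := by
      rw [Finset.sum_coe_sort D.S
        (fun γ => (((D.ccoeff (a j) γ : ℝ) - d γ) * (2 / ⟪γ, γ⟫)) • γ)]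
      exact hsum0
    have := hli _ hconv ⟨γ, hγ⟩
    have h2 : (2 : ℝ) / ⟪γ, γ⟫ ≠ 0 := by
      apply div_ne_zero (by norm_num) (hinner γ hγ)
    have := mul_eq_zero.mp this
    rcases this with h | h
    · linarith [sub_eq_zero.mp (by linarith : (D.ccoeff (a j) γ : ℝ) - d γ = 0)]
    · exact absurd h h2
  -- integer version off SP
  have hccoeff : ∀ γ ∈ D.S, γ ∉ SP → D.ccoeff (a j) γ = if γ = β then 1 else 0 := by
    intro γ hγ hγP
    have := hcoef γ hγ
    rw [hd] at this
    simp only [hγP, if_false, add_zero] at this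
    by_cases hγβ : γ = β
    · simp only [hγβ, if_true] at this ⊢
      exact_mod_cast this
    · simp only [hγβ, if_false] at this ⊢
      exact_mod_cast this
  -- β is not in the span of SP
  have hβnot : β ∉ Submodule.span ℝ (SP : Set V) := by
    have himg : Subtype.val '' {x : {v // v ∈ D.S} | (x : V) ∈ SP} = (SP : Set V) := by
      ext v
      constructor
      · rintro ⟨⟨y, hy⟩, hmemy, rfl⟩; exact hmemy
      · intro hv; exact ⟨⟨v, hSP hv⟩, hv, rfl⟩
    have := D.S_indep.notMem_span_image
      (s := {x : {v // v ∈ D.S} | (x : V) ∈ SP}) (x := ⟨β, hβS⟩) (by simpa using hβP)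
    rwa [himg] at this
  -- a j is not in RP SP
  have hajnot : a j ∉ D.RP SP := by
    intro hmemRP
    rw [RootSystemWithBase.RP, Finset.mem_filter] at hmemRP
    obtain ⟨-, c', -, hc'⟩ := hmemRP
    apply hβnot
    have hspan : ∀ x ∈ Submodule.span ℝ (SP : Set V), ∀ r : ℝ,
        r • x ∈ Submodule.span ℝ (SP : Set V) := fun x hx r => Submodule.smul_mem _ r hx
    have haj : a j ∈ Submodule.span ℝ (SP : Set V) := by
      rw [hc']
      apply Submodule.sum_mem
      intro δ hδ
      rw [hzsmul]
      exact Submodule.smul_mem _ _ (Submodule.subset_span hδ)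
    have hcoraj : D.coroot (a j) ∈ Submodule.span ℝ (SP : Set V) :=
      hspan _ haj _
    have hsum : ∑ δ ∈ SP, c j δ • D.coroot δ ∈ Submodule.span ℝ (SP : Set V) := by
      apply Submodule.sum_mem
      intro δ hδ
      rw [hzsmul, RootSystemWithBase.coroot, smul_smul]
      exact Submodule.smul_mem _ _ (Submodule.subset_span hδ)
    have hcorβ : D.coroot β ∈ Submodule.span ℝ (SP : Set V) := by
      have h := hform j hj
      have : D.coroot β = D.coroot (a j) - ∑ δ ∈ SP, c j δ • D.coroot δ := by
        rw [h]; abel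
      rw [this]
      exact Submodule.sub_mem _ hcoraj hsum
    have hβeq : β = (⟪β, β⟫ / 2) • D.coroot β := by
      rw [RootSystemWithBase.coroot, smul_smul]
      rw [div_mul_div_comm, mul_comm]
      rw [div_self (by have := hinner β hβS; positivity : (2 : ℝ) * ⟪β, β⟫ ≠ 0), one_smul]
    rw [hβeq]
    exact hspan _ hcorβ _
  -- conclude with the vanishing factor at α = a j
  apply Finset.prod_eq_zero (Finset.mem_sdiff.mpr ⟨hmem j hj, hajnot⟩)
  rw [hht j hj]
  have hsumk : ∑ γ ∈ D.S \ SP, k γ * D.ccoeff (a j) γ = k β := by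
    rw [Finset.sum_eq_single_of_mem β (Finset.mem_sdiff.mpr ⟨hβS, hβP⟩)]
    · rw [hccoeff β hβS hβP]
      simp
    · intro γ hγ hγβ
      rw [Finset.mem_sdiff] at hγ
      rw [hccoeff γ hγ.1 hγ.2]
      simp [hγβ]
  rw [hsumk, hk]
  ring
end

section
/- Let R be a finite, reduced, crystallographic root system spanning a finite-dimensional real inner product space V, with base S and positive roots R⁺, and let S_P ⊆ S with R_P⁺ the set of positive roots that are nonnegative integer combinations of elements of S_P. Then Σ_{β ∈ S∖S_P} (n_β − 1) ≤ #(R⁺∖R_P⁺), where n_β = 2 − ⟨Σ_{α ∈ R_P⁺} α, β^∨⟩. -/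
open scoped RealInnerProductSpace

/-
For `β ∈ S ∖ S_P`, let `R_β` be the set of positive roots whose support meets `S ∖ S_P` exactly
in `β`. These sets are pairwise disjoint subsets of `R⁺ ∖ R_P⁺`. For `α ∈ R_P⁺` the `β`-coefficient
of `α` vanishes, so `α` is not proportional to `β` and the `β`-string through `α` is unbroken:
`α + kβ` is a root for `0 ≤ k ≤ -⟨α, β^∨⟩`. For `k ≥ 1` these roots lie in `R_β ∖ {β}` and are
pairwise distinct, `k` being their `β`-coefficient. Hence
`n_β - 1 = 1 + Σ_{α ∈ R_P⁺} -⟨α, β^∨⟩ ≤ #R_β`, and summing over `β` gives the inequality.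
-/

theorem abs_real_inner_lt_norm_mul_norm {F : Type*} [NormedAddCommGroup F]
    [InnerProductSpace ℝ F] {x y : F} (hx : x ≠ 0) (hxy : ∀ r : ℝ, y ≠ r • x) :
    |⟪x, y⟫| < ‖x‖ * ‖y‖ := by
  have hy : y ≠ 0 := by simpa using hxy 0
  refine (abs_real_inner_le_norm x y).lt_of_ne fun h => ?_
  obtain ⟨r, -, hr⟩ := (norm_inner_eq_norm_iff (𝕜 := ℝ) hx hy).mp (by rwa [Real.norm_eq_abs])
  exact hxy r hr

namespace RootSystemWithBase

variable {V : Type*} [NormedAddCommGroup V] [InnerProductSpace ℝ V]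
  [FiniteDimensional ℝ V] (D : RootSystemWithBase V)

theorem inner_self_pos {α : V} (hα : α ∈ D.R) : 0 < ⟪α, α⟫ :=
  real_inner_self_pos.mpr (D.root_ne_zero α hα)

theorem cartan_neg_iff {α β : V} (hα : α ∈ D.R) (hβ : β ∈ D.R) :
    D.cartan α β < 0 ↔ ⟪α, β⟫ < 0 := by
  rw [← Int.cast_lt (R := ℝ), D.cartan_eq α hα β hβ, Int.cast_zero,
    div_lt_iff₀ (D.inner_self_pos hβ), zero_mul]
  constructor <;> intro h <;> linarith

theorem cartan_add_zsmul {α β : V} (hα : α ∈ D.R) (hβ : β ∈ D.R) {j : ℤ}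
    (hj : α + j • β ∈ D.R) : D.cartan (α + j • β) β = D.cartan α β + 2 * j := by
  have hββ := (D.inner_self_pos hβ).ne'
  rw [← Int.cast_inj (α := ℝ)]
  push_cast
  rw [D.cartan_eq _ hj β hβ, D.cartan_eq α hα β hβ, inner_add_left,
    ← Int.cast_smul_eq_zsmul ℝ, real_inner_smul_left]
  field_simp

theorem cartan_mul_cartan_lt_four {α β : V} (hα : α ∈ D.R) (hβ : β ∈ D.R)
    (hαβ : ∀ r : ℝ, β ≠ r • α) : D.cartan α β * D.cartan β α < 4 := by
  have hCS := abs_real_inner_lt_norm_mul_norm (D.root_ne_zero α hα) hαβ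
  rw [← Int.cast_lt (R := ℝ)]
  push_cast
  rw [D.cartan_eq α hα β hβ, D.cartan_eq β hβ α hα, real_inner_comm α β,
    real_inner_self_eq_norm_sq, real_inner_self_eq_norm_sq]
  have hα0 := norm_pos_iff.mpr (D.root_ne_zero α hα)
  have hβ0 := norm_pos_iff.mpr (D.root_ne_zero β hβ)
  rw [div_mul_div_comm, div_lt_iff₀ (by positivity)]
  nlinarith [abs_mul_abs_self ⟪α, β⟫, abs_nonneg ⟪α, β⟫, mul_pos hα0 hβ0]

theorem add_mem_of_inner_neg {α β : V} (hα : α ∈ D.R) (hβ : β ∈ D.R) (hne : α + β ≠ 0)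
    (hneg : ⟪α, β⟫ < 0) : α + β ∈ D.R := by
  have hαβ : ∀ r : ℝ, β ≠ r • α := by
    rintro r rfl
    rcases D.reduced α hα r hβ with rfl | rfl
    · linarith [D.inner_self_pos hα, (one_smul ℝ α ▸ hneg :)]
    · simp at hne
  have h1 := (D.cartan_neg_iff hα hβ).mpr hneg
  have h2 := (D.cartan_neg_iff hβ hα).mpr (real_inner_comm α β ▸ hneg)
  have hlt := D.cartan_mul_cartan_lt_four hα hβ hαβ
  obtain h | h : D.cartan α β = -1 ∨ D.cartan β α = -1 := by
    by_contra! h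
    have : D.cartan α β ≤ -2 := by omega
    have : D.cartan β α ≤ -2 := by omega
    nlinarith
  · simpa [h] using D.reflect_mem β hβ α hα
  · simpa [h, add_comm] using D.reflect_mem α hα β hβ

theorem add_zsmul_mem_of_two_mul_le {α β : V} (hα : α ∈ D.R) (hβ : β ∈ D.R)
    (hαβ : ∀ r : ℝ, α ≠ r • β) {k : ℤ} (hk0 : 0 ≤ k) (hk : 2 * k ≤ -D.cartan α β) :
    α + k • β ∈ D.R := by
  induction k, hk0 using Int.leInduction with
  | base => simpa using hα
  | succ k _ ih =>
    have hmem := ih (by omega)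
    have hneg : ⟪α + k • β, β⟫ < 0 := by
      rw [← D.cartan_neg_iff hmem hβ, D.cartan_add_zsmul hα hβ hmem]
      omega
    have hne : α + k • β + β ≠ 0 := fun h => hαβ (-(k + 1)) <| by
      rw [← Int.cast_smul_eq_zsmul ℝ] at h
      linear_combination (norm := module) h
    simpa [add_smul, add_assoc] using D.add_mem_of_inner_neg hmem hβ hne hneg

theorem add_zsmul_mem {α β : V} (hα : α ∈ D.R) (hβ : β ∈ D.R)
    (hαβ : ∀ r : ℝ, α ≠ r • β) {k : ℤ} (hk0 : 0 ≤ k) (hk : k ≤ -D.cartan α β) :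
    α + k • β ∈ D.R := by
  by_cases h : 2 * k ≤ -D.cartan α β
  · exact D.add_zsmul_mem_of_two_mul_le hα hβ hαβ hk0 h
  -- `s_β` maps `α + j • β` to `α + (m - j) • β`, where `m = -⟨α, β^∨⟩`.
  have hmem := D.add_zsmul_mem_of_two_mul_le hα hβ hαβ (k := -D.cartan α β - k)
    (by omega) (by omega)
  have hrefl := D.reflect_mem β hβ _ hmem
  rw [D.cartan_add_zsmul hα hβ hmem] at hrefl
  convert hrefl using 1
  module

noncomputable def simpleBasis : Module.Basis D.S ℝ V :=
  Module.Basis.mk D.S_indep <| by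
    rw [← D.span_top, Subtype.range_coe_subtype, Submodule.span_le]
    intro α hα
    rw [D.root_eq_sum α hα]
    exact Submodule.sum_mem _ fun γ hγ =>
      Submodule.smul_of_tower_mem _ _ (Submodule.subset_span hγ)

@[simp]
theorem simpleBasis_apply (γ : D.S) : D.simpleBasis γ = γ :=
  Module.Basis.mk_apply _ _ γ

theorem simpleBasis_repr_of_mem {β : V} (hβ : β ∈ D.S) :
    D.simpleBasis.repr β = Finsupp.single ⟨β, hβ⟩ 1 := by
  simpa using D.simpleBasis.repr_self ⟨β, hβ⟩

theorem coeff_eq_repr {α : V} (hα : α ∈ D.R) (γ : D.S) :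
    (D.coeff α γ : ℝ) = D.simpleBasis.repr α γ := by
  conv_rhs => rw [D.root_eq_sum α hα, ← Finset.sum_coe_sort]
  simp_rw [← Int.cast_smul_eq_zsmul ℝ, ← D.simpleBasis_apply, Module.Basis.repr_sum_self]

theorem coeff_add_zsmul {α β : V} (hα : α ∈ D.R) (hβ : β ∈ D.R) {k : ℤ}
    (hk : α + k • β ∈ D.R) (γ : D.S) :
    D.coeff (α + k • β) γ = D.coeff α γ + k * D.coeff β γ := by
  rw [← Int.cast_inj (α := ℝ)]
  push_cast
  simp [D.coeff_eq_repr hα, D.coeff_eq_repr hβ, D.coeff_eq_repr hk]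

theorem coeff_self_of_mem {β : V} (hβ : β ∈ D.S) : D.coeff β β = 1 := by
  rw [← Int.cast_inj (α := ℝ), D.coeff_eq_repr (D.Rpos_subset β (D.S_subset β hβ)) ⟨β, hβ⟩,
    D.simpleBasis_repr_of_mem hβ]
  simp

theorem coeff_eq_zero_of_ne {β γ : V} (hβ : β ∈ D.S) (hγ : γ ∈ D.S) (hne : γ ≠ β) :
    D.coeff β γ = 0 := by
  rw [← Int.cast_inj (α := ℝ), D.coeff_eq_repr (D.Rpos_subset β (D.S_subset β hβ)) ⟨γ, hγ⟩,
    D.simpleBasis_repr_of_mem hβ, Finsupp.single_eq_of_ne (by simpa [Subtype.ext_iff] using hne)]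
  simp

theorem RP_subset (SP : Finset V) : D.RP SP ⊆ D.Rpos := by
  classical
  exact Finset.filter_subset _ _

theorem coeff_eq_zero_of_mem_RP {SP : Finset V} (hSP : SP ⊆ D.S) {α : V} (hα : α ∈ D.RP SP)
    {β : V} (hβ : β ∈ D.S) (hβSP : β ∉ SP) : D.coeff α β = 0 := by
  simp only [RP, Finset.mem_filter] at hα
  obtain ⟨hαpos, c, -, hc⟩ := hα
  rw [← Int.cast_inj (α := ℝ), Int.cast_zero, D.coeff_eq_repr (D.Rpos_subset α hαpos) ⟨β, hβ⟩,
    hc, map_sum, Finsupp.finsetSum_apply]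
  refine Finset.sum_eq_zero fun d hd => ?_
  have hdβ : (⟨β, hβ⟩ : D.S) ≠ ⟨d, hSP hd⟩ := by
    rintro ⟨⟩
    exact hβSP hd
  simp [D.simpleBasis_repr_of_mem (hSP hd), Finsupp.single_eq_of_ne hdβ]

theorem ne_smul_of_coeff_eq_zero {α β : V} (hα : α ∈ D.R) (hβ : β ∈ D.S)
    (hαβ : D.coeff α β = 0) (r : ℝ) : α ≠ r • β := by
  rintro rfl
  have hr := D.coeff_eq_repr hα ⟨β, hβ⟩
  rw [hαβ, map_smul, D.simpleBasis_repr_of_mem hβ] at hr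
  simp only [Int.cast_zero, Finsupp.smul_apply, Finsupp.single_eq_same, smul_eq_mul,
    mul_one] at hr
  exact D.root_ne_zero _ hα (by rw [← hr, zero_smul])

section Parabolic

variable [DecidableEq V] {SP : Finset V} {β : V}

/-- `R_β`: the positive roots of the parabolic subsystem on `insert β SP` that are not in
`R_P⁺`. -/
def addedRoots (SP : Finset V) (β : V) : Finset V :=
  D.Rpos.filter fun γ => 0 < D.coeff γ β ∧ ∀ δ ∈ D.S \ SP, δ ≠ β → D.coeff γ δ = 0

theorem addedRoots_subset (hSP : SP ⊆ D.S) (hβ : β ∈ D.S \ SP) :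
    D.addedRoots SP β ⊆ D.Rpos \ D.RP SP := by
  obtain ⟨hβS, hβSP⟩ := Finset.mem_sdiff.mp hβ
  intro γ hγ
  obtain ⟨hγpos, hγβ, -⟩ := Finset.mem_filter.mp hγ
  refine Finset.mem_sdiff.mpr ⟨hγpos, fun hγRP => ?_⟩
  rw [D.coeff_eq_zero_of_mem_RP hSP hγRP hβS hβSP] at hγβ
  exact hγβ.false

theorem pairwiseDisjoint_addedRoots (SP : Finset V) :
    (↑(D.S \ SP) : Set V).PairwiseDisjoint (D.addedRoots SP) := by
  intro β₁ hβ₁ β₂ _ hne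
  refine Finset.disjoint_left.mpr fun γ hγ₁ hγ₂ => ?_
  have h₁ := (Finset.mem_filter.mp hγ₁).2.1
  rw [(Finset.mem_filter.mp hγ₂).2.2 β₁ hβ₁ hne] at h₁
  exact h₁.false

theorem mem_addedRoots_self (hβ : β ∈ D.S) : β ∈ D.addedRoots SP β := by
  refine Finset.mem_filter.mpr ⟨D.S_subset β hβ, ?_, fun δ hδ hne => ?_⟩
  · rw [D.coeff_self_of_mem hβ]
    exact one_pos
  · exact D.coeff_eq_zero_of_ne hβ (Finset.mem_sdiff.mp hδ).1 hne

theorem add_zsmul_mem_addedRoots (hSP : SP ⊆ D.S) (hβ : β ∈ D.S \ SP) {α : V}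
    (hα : α ∈ D.RP SP) {k : ℤ} (hk₁ : 1 ≤ k) (hk : k ≤ -D.cartan α β) :
    α + k • β ∈ (D.addedRoots SP β).erase β ∧ D.coeff (α + k • β) β = k := by
  obtain ⟨hβS, hβSP⟩ := Finset.mem_sdiff.mp hβ
  have hβpos := D.S_subset β hβS
  have hαpos := D.RP_subset SP hα
  have hαR := D.Rpos_subset α hαpos
  have hβR := D.Rpos_subset β hβpos
  have hαβ := D.coeff_eq_zero_of_mem_RP hSP hα hβS hβSP
  have hpar := D.ne_smul_of_coeff_eq_zero hαR hβS hαβ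
  have hmem := D.add_zsmul_mem hαR hβR hpar (by omega) hk
  have hcoeff (γ : D.S) := D.coeff_add_zsmul hαR hβR hmem γ
  have hcoeffβ : D.coeff (α + k • β) β = k := by
    rw [hcoeff ⟨β, hβS⟩, hαβ, D.coeff_self_of_mem hβS]
    simp
  refine ⟨Finset.mem_erase.mpr ⟨fun h => hpar (1 - k) ?_, ?_⟩, hcoeffβ⟩
  · rw [← Int.cast_smul_eq_zsmul ℝ] at h
    linear_combination (norm := module) h
  refine Finset.mem_filter.mpr ⟨?_, by omega, fun δ hδ hne => ?_⟩
  · rw [D.mem_Rpos_iff _ hmem]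
    intro γ hγ
    rw [hcoeff ⟨γ, hγ⟩]
    have := (D.mem_Rpos_iff α hαR).mp hαpos γ hγ
    have := (D.mem_Rpos_iff β hβR).mp hβpos γ hγ
    positivity
  · obtain ⟨hδS, hδSP⟩ := Finset.mem_sdiff.mp hδ
    rw [hcoeff ⟨δ, hδS⟩, D.coeff_eq_zero_of_mem_RP hSP hα hδS hδSP,
      D.coeff_eq_zero_of_ne hβS hδS hne]
    simp

theorem n_sub_one_le_card_addedRoots (hSP : SP ⊆ D.S) (hβ : β ∈ D.S \ SP) :
    D.n SP β - 1 ≤ ((D.addedRoots SP β).card : ℤ) := by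
  set strings := (D.RP SP).sigma fun α => Finset.Icc 1 (-D.cartan α β)
  have key : ∀ p ∈ strings, p.1 + p.2 • β ∈ (D.addedRoots SP β).erase β ∧
      D.coeff (p.1 + p.2 • β) β = p.2 := by
    rintro ⟨α, k⟩ hp
    obtain ⟨hα, hk⟩ := Finset.mem_sigma.mp hp
    obtain ⟨hk₁, hk⟩ := Finset.mem_Icc.mp hk
    exact D.add_zsmul_mem_addedRoots hSP hβ hα hk₁ hk
  have hinj : Set.InjOn (fun p : (_ : V) × ℤ => p.1 + p.2 • β) strings := by
    rintro ⟨α, k⟩ hp ⟨α', k'⟩ hp' h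
    have hkk : k = k' :=
      (key _ hp).2.symm.trans ((congrArg (D.coeff · β) h).trans (key _ hp').2)
    subst hkk
    simpa using h
  calc D.n SP β - 1 = 1 + ∑ α ∈ D.RP SP, -D.cartan α β := by
        rw [n, Finset.sum_neg_distrib]
        ring
    _ ≤ 1 + ∑ α ∈ D.RP SP, ((-D.cartan α β).toNat : ℤ) := by
        gcongr
        exact Int.self_le_toNat _
    _ = 1 + strings.card := by
        simp [strings, Finset.card_sigma]
    _ ≤ 1 + ((D.addedRoots SP β).erase β).card := by
        gcongr
        exact Finset.card_le_card_of_injOn _ (fun p hp => (key p hp).1) hinj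
    _ = (D.addedRoots SP β).card := by
        rw [← Finset.card_erase_add_one (D.mem_addedRoots_self (Finset.mem_sdiff.mp hβ).1)]
        push_cast
        ring

end Parabolic

end RootSystemWithBase

/-- `Σ_{β ∈ S∖S_P} (n_β − 1) ≤ #(R⁺ ∖ R_P⁺)`, where
`n_β = 2 − ⟨Σ_{α ∈ R_P⁺} α, β^∨⟩`.  (Strengthened Mukai inequality for
generalized flag varieties.) -/
theorem strong_mukai_inequality {V : Type*} [NormedAddCommGroup V]
    [InnerProductSpace ℝ V] [FiniteDimensional ℝ V] [DecidableEq V]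
    (D : RootSystemWithBase V) (SP : Finset V) (hSP : SP ⊆ D.S) :
    (∑ β ∈ D.S \ SP, (D.n SP β - 1)) ≤ ((D.Rpos \ D.RP SP).card : ℤ) := by
  calc ∑ β ∈ D.S \ SP, (D.n SP β - 1)
      ≤ ∑ β ∈ D.S \ SP, ((D.addedRoots SP β).card : ℤ) :=
        Finset.sum_le_sum fun β hβ => D.n_sub_one_le_card_addedRoots hSP hβ
    _ = ((D.S \ SP).biUnion (D.addedRoots SP)).card := by
        rw [Finset.card_biUnion (D.pairwiseDisjoint_addedRoots SP), Nat.cast_sum]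
    _ ≤ (D.Rpos \ D.RP SP).card := by
        gcongr
        exact Finset.biUnion_subset.mpr fun β hβ => D.addedRoots_subset hSP hβ
end

section
/- Let R be a finite, reduced, crystallographic root system spanning a finite-dimensional real inner product space V, with base S and positive roots R⁺, and let S_P ⊆ S with R_P⁺ the set of positive roots that are nonnegative integer combinations of elements of S_P. Let β ∈ S∖S_P and suppose β^∨ + γ and β^∨ + γ + n·α^∨ are both coroots of roots of R, where α ∈ S_P, n is a positive integer, and γ is a nonnegative integer combination of coroots of elements of S_P. Then β^∨ + γ + m·α^∨ is the coroot of a root of R for every integer m with 0 ≤ m ≤ n. Consequently, every maximal string of coroots for S_P and β with a jump can be completed, by filling all its gaps, into a maximal good string of coroots for S_P and β. -/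
open scoped RealInnerProductSpace

/-! The argument runs in the dual root system. If `x` and `y` are coroots with `⟪x, y⟫ < 0` and
`x + y ≠ 0`, then `x + y` is a coroot: the integers `2⟪x, y⟫/‖x‖²` and `2⟪x, y⟫/‖y‖²` are
negative with product at most `4` by Cauchy–Schwarz, so one of them is `-1` (and reflecting the
other coroot gives `x + y`) unless both are `-2`, which forces `x + y = 0`.

Now let `x` and `x + w` be coroots, where `w = ∑ e δ • δ^∨` is a nonzero nonnegative combination
of simple coroots from `T` and `x` is not in their span. Since `⟪x + w, w⟫ - ⟪x, w⟫ = ‖w‖² > 0`,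
either `⟪x, δ^∨⟫ < 0` or `⟪x + w, δ^∨⟫ > 0` for some `δ` with `e δ > 0`, so `x + δ^∨` or
`x + w - δ^∨` is a coroot. By induction on `∑ e δ`, coroots `x + ∑ f δ • δ^∨` occur at every
level `∑ f δ` between `0` and `∑ e δ`. With `T = {α}` this is the unbroken string. With
`T = S_P`, `x = β^∨` and `x + w` the top of the given string, it supplies a positive root of every
height up to `n_β - 1`, and splicing these into the gaps of the string gives the good string.
-/

theorem exists_consecutive_refinement {ι : Type*} (P : ι → Prop) (h : ι → ℤ) (a : ℕ → ι)
    (L : ℕ) (ha : ∀ i ≤ L, P (a i)) (hmono : ∀ i < L, h (a i) < h (a (i + 1)))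
    (hfill : ∀ t, h (a 0) ≤ t → t ≤ h (a L) → ∃ x, P x ∧ h x = t) :
    ∃ (N : ℕ) (a' : ℕ → ι), a' 0 = a 0 ∧ (∀ i ≤ N, P (a' i) ∧ h (a' i) = h (a 0) + i) ∧
      h (a' N) = h (a L) ∧ ∀ j ≤ L, ∃ i ≤ N, a' i = a j := by
  have hsm : StrictMonoOn (h ∘ a) (Set.Iic L) :=
    strictMonoOn_Iic_of_lt_succ fun m hm => by simpa using hmono m hm
  have hbound : ∀ j ≤ L, h (a 0) ≤ h (a j) ∧ h (a j) ≤ h (a L) := fun j hj =>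
    ⟨hsm.monotoneOn (Nat.zero_le L) hj (Nat.zero_le j),
      hsm.monotoneOn hj (Set.mem_Iic.2 le_rfl) hj⟩
  have hpick : ∀ t, ∃ x, (h (a 0) ≤ t → t ≤ h (a L) → P x ∧ h x = t) ∧
      ∀ j ≤ L, h (a j) = t → x = a j := by
    intro t
    by_cases hj : ∃ j ≤ L, h (a j) = t
    · obtain ⟨j, hj, rfl⟩ := hj
      exact ⟨a j, fun _ _ => ⟨ha j hj, rfl⟩, fun j' hj' he => by rw [hsm.injOn hj hj' he.symm]⟩
    push Not at hj
    by_cases ht : h (a 0) ≤ t ∧ t ≤ h (a L)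
    · obtain ⟨x, hx⟩ := hfill t ht.1 ht.2
      exact ⟨x, fun _ _ => hx, fun j hj' he => (hj j hj' he).elim⟩
    · exact ⟨a 0, fun h1 h2 => (ht ⟨h1, h2⟩).elim, fun j hj' he => (hj j hj' he).elim⟩
  choose g hgP hga using hpick
  have hL := hbound L le_rfl
  refine ⟨(h (a L) - h (a 0)).toNat, fun i => g (h (a 0) + i),
    by simpa using hga _ 0 (Nat.zero_le L) rfl, fun i hi => hgP _ (by omega) (by omega), ?_,
    fun j hj => ?_⟩
  · rw [(hgP _ (by omega) (by omega)).2]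
    omega
  · have := hbound j hj
    exact ⟨(h (a j) - h (a 0)).toNat, by omega, hga _ j hj (by omega)⟩

namespace RootSystemWithBase

open Submodule Module

variable {V : Type*} [NormedAddCommGroup V] [InnerProductSpace ℝ V] [FiniteDimensional ℝ V]
  (D : RootSystemWithBase V)

def IsCoroot (x : V) : Prop := ∃ r ∈ D.R, D.coroot r = x

variable {D}

theorem coroot_neg (r : V) : D.coroot (-r) = -D.coroot r := by
  simp [coroot]

theorem coroot_refl (a v : V) : D.coroot (D.refl a v) = D.refl (D.coroot a) (D.coroot v) := by
  rcases eq_or_ne a 0 with rfl | ha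
  · simp [refl, coroot]
  rcases eq_or_ne v 0 with rfl | hv
  · simp [coroot, refl]
  have haa : ⟪a, a⟫ ≠ 0 := inner_self_ne_zero.2 ha
  have hvv : ⟪v, v⟫ ≠ 0 := inner_self_ne_zero.2 hv
  have hnorm : ⟪D.refl a v, D.refl a v⟫ = ⟪v, v⟫ := by
    simp only [refl, inner_sub_left, inner_sub_right, real_inner_smul_left,
      real_inner_smul_right, real_inner_comm a v]
    field_simp
    ring
  rw [coroot, hnorm]
  simp only [coroot, refl, real_inner_smul_left, real_inner_smul_right, smul_sub, smul_smul]
  congr 2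
  field_simp

theorem isCoroot_coroot_of_mem_S {δ : V} (hδ : δ ∈ D.S) : D.IsCoroot (D.coroot δ) :=
  ⟨δ, D.Rpos_subset _ (D.S_subset _ hδ), rfl⟩

theorem IsCoroot.ne_zero {x : V} (hx : D.IsCoroot x) : x ≠ 0 := by
  obtain ⟨r, hr, rfl⟩ := hx
  simp [coroot, D.root_ne_zero r hr]

theorem IsCoroot.neg {x : V} (hx : D.IsCoroot x) : D.IsCoroot (-x) := by
  obtain ⟨r, hr, rfl⟩ := hx
  exact ⟨-r, D.neg_mem r hr, coroot_neg r⟩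

theorem IsCoroot.refl {x y : V} (hx : D.IsCoroot x) (hy : D.IsCoroot y) :
    D.IsCoroot (D.refl x y) := by
  obtain ⟨r, hr, rfl⟩ := hx
  obtain ⟨s, hs, rfl⟩ := hy
  refine ⟨D.refl r s, ?_, coroot_refl r s⟩
  have := D.reflect_mem r hr s hs
  rwa [← Int.cast_smul_eq_zsmul ℝ (D.cartan s r) r, D.cartan_eq s hs r hr] at this

theorem IsCoroot.exists_int_eq_two_inner_div {x y : V} (hx : D.IsCoroot x) (hy : D.IsCoroot y) :
    ∃ k : ℤ, 2 * ⟪y, x⟫ / ⟪x, x⟫ = k := by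
  obtain ⟨r, hr, rfl⟩ := hx
  obtain ⟨s, hs, rfl⟩ := hy
  refine ⟨D.cartan r s, ?_⟩
  have hr0 : ⟪r, r⟫ ≠ 0 := inner_self_ne_zero.2 (D.root_ne_zero r hr)
  have hs0 : ⟪s, s⟫ ≠ 0 := inner_self_ne_zero.2 (D.root_ne_zero s hs)
  rw [D.cartan_eq r hr s hs]
  simp only [coroot, real_inner_smul_left, real_inner_smul_right, real_inner_comm r s]
  field_simp

theorem IsCoroot.add_of_inner_neg {x y : V} (hx : D.IsCoroot x) (hy : D.IsCoroot y)
    (hxy : ⟪x, y⟫ < 0) (hne : x + y ≠ 0) : D.IsCoroot (x + y) := by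
  have hxx : 0 < ⟪x, x⟫ := real_inner_self_pos.2 hx.ne_zero
  have hyy : 0 < ⟪y, y⟫ := real_inner_self_pos.2 hy.ne_zero
  obtain ⟨a, ha⟩ := hx.exists_int_eq_two_inner_div hy
  obtain ⟨b, hb⟩ := hy.exists_int_eq_two_inner_div hx
  have ha' : 2 * ⟪x, y⟫ = a * ⟪x, x⟫ := by rw [real_inner_comm, ← ha]; field_simp
  have hb' : 2 * ⟪x, y⟫ = b * ⟪y, y⟫ := by rw [← hb]; field_simp
  have ha0 : a < 0 := by exact_mod_cast (show (a : ℝ) < 0 by nlinarith)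
  have hb0 : b < 0 := by exact_mod_cast (show (b : ℝ) < 0 by nlinarith)
  have hab : a * b ≤ 4 := by
    have hcs := real_inner_mul_inner_self_le x y
    have : (a * b : ℝ) * (⟪x, x⟫ * ⟪y, y⟫) ≤ 4 * (⟪x, x⟫ * ⟪y, y⟫) := by nlinarith
    exact_mod_cast le_of_mul_le_mul_right this (by positivity)
  obtain rfl | ha2 : a = -1 ∨ a ≤ -2 := by omega
  · have := hx.refl hy
    rwa [RootSystemWithBase.refl, ha, Int.cast_neg, Int.cast_one, neg_one_smul, sub_neg_eq_add,
      add_comm] at this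
  obtain rfl | hb2 : b = -1 ∨ b ≤ -2 := by omega
  · have := hy.refl hx
    rwa [RootSystemWithBase.refl, hb, Int.cast_neg, Int.cast_one, neg_one_smul,
      sub_neg_eq_add] at this
  obtain ⟨rfl, rfl⟩ : a = -2 ∧ b = -2 := by constructor <;> nlinarith
  refine absurd ((inner_self_eq_zero (𝕜 := ℝ)).1 ?_) hne
  simp only [inner_add_left, inner_add_right, real_inner_comm x y]
  push_cast at ha' hb'
  linarith

theorem IsCoroot.sub_of_inner_pos {x y : V} (hx : D.IsCoroot x) (hy : D.IsCoroot y)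
    (hxy : 0 < ⟪x, y⟫) (hne : x ≠ y) : D.IsCoroot (x - y) := by
  rw [sub_eq_add_neg]
  exact hx.add_of_inner_neg hy.neg (by rwa [inner_neg_right, neg_lt_zero])
    (by rwa [← sub_eq_add_neg, sub_ne_zero])

variable (D)

theorem two_div_inner_self_ne_zero {r : V} (hr : r ∈ D.R) : 2 / ⟪r, r⟫ ≠ 0 :=
  div_ne_zero two_ne_zero (inner_self_ne_zero.2 (D.root_ne_zero r hr))

theorem linearIndependent_coroot_simple : LinearIndependent ℝ fun γ : D.S => D.coroot γ :=
  D.S_indep.units_smul fun γ => Units.mk0 _ <|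
    D.two_div_inner_self_ne_zero (D.Rpos_subset _ (D.S_subset _ γ.2))

theorem span_coroot_simple : ⊤ ≤ span ℝ (Set.range fun γ : D.S => D.coroot γ) := by
  have hS : ∀ γ ∈ D.S, γ ∈ span ℝ (Set.range fun γ : D.S => D.coroot γ) := fun γ hγ => by
    have := D.two_div_inner_self_ne_zero (D.Rpos_subset _ (D.S_subset _ hγ))
    rw [← inv_smul_smul₀ this γ]
    exact smul_mem _ _ (subset_span ⟨⟨γ, hγ⟩, rfl⟩)
  rw [← D.span_top, span_le]
  intro α hα
  rw [D.root_eq_sum α hα]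
  exact sum_mem fun γ hγ => zsmul_mem (hS γ hγ) _

noncomputable def corootBasis : Basis D.S ℝ V :=
  Basis.mk D.linearIndependent_coroot_simple D.span_coroot_simple

@[simp]
theorem corootBasis_apply (γ : D.S) : D.corootBasis γ = D.coroot γ := Basis.mk_apply _ _ _

theorem corootBasis_repr_coroot {r : V} (hr : r ∈ D.Rpos) (γ : D.S) :
    D.corootBasis.repr (D.coroot r) γ = D.ccoeff r γ := by
  have : D.coroot r = ∑ γ : D.S, (D.ccoeff r γ : ℝ) • D.corootBasis γ := by
    simp only [corootBasis_apply, Int.cast_smul_eq_zsmul]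
    exact (D.coroot_eq_sum r hr).trans (D.S.sum_coe_sort fun γ => D.ccoeff r γ • D.coroot γ).symm
  rw [this, Basis.repr_sum_self]

theorem ht_eq_sumCoords {r : V} (hr : r ∈ D.Rpos) :
    (D.ht r : ℝ) = D.corootBasis.sumCoords (D.coroot r) := by
  rw [Basis.coe_sumCoords_of_fintype, LinearMap.sum_apply, ht, Int.cast_sum,
    ← D.S.sum_coe_sort]
  simp only [Basis.coord_apply, D.corootBasis_repr_coroot hr]

theorem sumCoords_coroot_simple {γ : V} (hγ : γ ∈ D.S) :
    D.corootBasis.sumCoords (D.coroot γ) = 1 := by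
  simpa using D.corootBasis.sumCoords_self_apply (i := ⟨γ, hγ⟩)

theorem ht_eq_one_of_mem_S {β : V} (hβ : β ∈ D.S) : D.ht β = 1 := by
  have := D.ht_eq_sumCoords (D.S_subset _ hβ)
  rwa [D.sumCoords_coroot_simple hβ, Int.cast_eq_one] at this

variable {D} {T : Finset V}

theorem sumCoords_sum_smul_coroot (hT : T ⊆ D.S) (c : V → ℤ) :
    D.corootBasis.sumCoords (∑ δ ∈ T, c δ • D.coroot δ) = ∑ δ ∈ T, c δ := by
  rw [map_sum, Int.cast_sum]
  refine Finset.sum_congr rfl fun δ hδ => ?_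
  rw [map_zsmul, D.sumCoords_coroot_simple (hT hδ), zsmul_one]

theorem ht_eq_of_coroot_eq {β r : V} (hT : T ⊆ D.S) (hβ : β ∈ D.S) (hr : r ∈ D.Rpos)
    {c : V → ℤ} (h : D.coroot r = D.coroot β + ∑ δ ∈ T, c δ • D.coroot δ) :
    D.ht r = 1 + ∑ δ ∈ T, c δ := by
  have := D.ht_eq_sumCoords hr
  rw [h, map_add, D.sumCoords_coroot_simple hβ, sumCoords_sum_smul_coroot hT] at this
  exact_mod_cast this

theorem coroot_mem_span {δ : V} (hδ : δ ∈ T) : D.coroot δ ∈ span ℝ (D.coroot '' T) :=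
  subset_span (Set.mem_image_of_mem _ hδ)

theorem sum_smul_coroot_mem_span (c : V → ℤ) :
    ∑ δ ∈ T, c δ • D.coroot δ ∈ span ℝ (D.coroot '' T) :=
  sum_mem fun _ hδ => zsmul_mem (coroot_mem_span hδ) _

theorem coord_eq_zero_of_mem_span {β v : V} (hT : T ⊆ D.S) (hβ : β ∈ D.S) (hβT : β ∉ T)
    (hv : v ∈ span ℝ (D.coroot '' T)) : D.corootBasis.coord ⟨β, hβ⟩ v = 0 := by
  refine LinearMap.mem_ker.1 (span_le.2 ?_ hv)
  rintro _ ⟨δ, hδ, rfl⟩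
  have hδβ : (⟨δ, hT hδ⟩ : D.S) ≠ ⟨β, hβ⟩ := fun h => hβT (Subtype.mk.inj h ▸ hδ)
  rw [SetLike.mem_coe, LinearMap.mem_ker, ← D.corootBasis_apply ⟨δ, hT hδ⟩, Basis.coord_apply,
    Basis.repr_self, Finsupp.single_eq_of_ne hδβ.symm]

theorem coord_coroot_add_of_mem_span {β v : V} (hT : T ⊆ D.S) (hβ : β ∈ D.S) (hβT : β ∉ T)
    (hv : v ∈ span ℝ (D.coroot '' T)) : D.corootBasis.coord ⟨β, hβ⟩ (D.coroot β + v) = 1 := by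
  rw [map_add, coord_eq_zero_of_mem_span hT hβ hβT hv, ← D.corootBasis_apply ⟨β, hβ⟩,
    Basis.coord_apply, Basis.repr_self, Finsupp.single_eq_same, add_zero]

theorem coroot_add_notMem_span {β v : V} (hT : T ⊆ D.S) (hβ : β ∈ D.S) (hβT : β ∉ T)
    (hv : v ∈ span ℝ (D.coroot '' T)) : D.coroot β + v ∉ span ℝ (D.coroot '' T) := fun h =>
  one_ne_zero <| (coord_coroot_add_of_mem_span hT hβ hβT hv).symm.trans
    (coord_eq_zero_of_mem_span hT hβ hβT h)

theorem mem_Rpos_of_coroot_eq_add {β v r : V} (hT : T ⊆ D.S) (hβ : β ∈ D.S) (hβT : β ∉ T)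
    (hv : v ∈ span ℝ (D.coroot '' T)) (hr : r ∈ D.R) (h : D.coroot r = D.coroot β + v) :
    r ∈ D.Rpos := by
  refine (D.pos_or_neg r hr).resolve_right fun hneg => ?_
  have hcoord := D.corootBasis_repr_coroot hneg ⟨β, hβ⟩
  rw [coroot_neg, h, map_neg, Finsupp.neg_apply, ← Basis.coord_apply,
    coord_coroot_add_of_mem_span hT hβ hβT hv] at hcoord
  have hnonneg : (0 : ℝ) ≤ D.ccoeff (-r) β := by exact_mod_cast D.ccoeff_nonneg (-r) hneg β hβ
  linarith

theorem exists_isCoroot_add_or_sub (hT : T ⊆ D.S) {x : V} (hx : x ∉ span ℝ (D.coroot '' T))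
    (hxC : D.IsCoroot x) {e : V → ℤ} (he : ∀ δ, 0 ≤ e δ) (hpos : 0 < ∑ δ ∈ T, e δ)
    (hy : D.IsCoroot (x + ∑ δ ∈ T, e δ • D.coroot δ)) :
    ∃ δ ∈ T, 0 < e δ ∧ (D.IsCoroot (x + D.coroot δ) ∨
      D.IsCoroot (x + ∑ δ ∈ T, e δ • D.coroot δ - D.coroot δ)) := by
  set w := ∑ δ ∈ T, e δ • D.coroot δ with hw
  have hinner : ∀ z, ⟪z, w⟫ = ∑ δ ∈ T, (e δ : ℝ) * ⟪z, D.coroot δ⟫ := fun z => by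
    simp only [hw, inner_sum, ← Int.cast_smul_eq_zsmul ℝ, real_inner_smul_right]
  have hw0 : w ≠ 0 := fun h => by
    have := sumCoords_sum_smul_coroot hT e
    rw [← hw, h, map_zero] at this
    exact hpos.ne' (by exact_mod_cast this.symm)
  have hww : 0 < ⟪w, w⟫ := real_inner_self_pos.2 hw0
  rcases lt_or_ge ⟪x, w⟫ 0 with hxw | hxw
  · obtain ⟨δ, hδ, hneg⟩ : ∃ δ ∈ T, (e δ : ℝ) * ⟪x, D.coroot δ⟫ < 0 := by
      rw [hinner] at hxw
      exact Finset.exists_lt_of_sum_lt (by simpa using hxw)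
    refine ⟨δ, hδ, (he δ).lt_of_ne (by rintro h; simp [← h] at hneg), .inl ?_⟩
    refine hxC.add_of_inner_neg (isCoroot_coroot_of_mem_S (hT hδ))
      (neg_of_mul_neg_right hneg (by exact_mod_cast he δ)) fun h => hx ?_
    rw [eq_neg_of_add_eq_zero_left h]
    exact Submodule.neg_mem _ (coroot_mem_span hδ)
  · have hyw : 0 < ⟪x + w, w⟫ := by rw [inner_add_left]; linarith
    obtain ⟨δ, hδ, hpos⟩ : ∃ δ ∈ T, 0 < (e δ : ℝ) * ⟪x + w, D.coroot δ⟫ := by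
      rw [hinner] at hyw
      exact Finset.exists_lt_of_sum_lt (by simpa using hyw)
    refine ⟨δ, hδ, (he δ).lt_of_ne (by rintro h; simp [← h] at hpos), .inr ?_⟩
    refine hy.sub_of_inner_pos (isCoroot_coroot_of_mem_S (hT hδ))
      (pos_of_mul_pos_right hpos (by exact_mod_cast he δ)) fun h => hx ?_
    have := sub_mem (h ▸ coroot_mem_span hδ : x + w ∈ _) (sum_smul_coroot_mem_span (D := D) e)
    rwa [← hw, add_sub_cancel_right] at this

theorem exists_isCoroot_of_le_sum (hT : T ⊆ D.S) {x : V} (hx : x ∉ span ℝ (D.coroot '' T))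
    (hxC : D.IsCoroot x) {e : V → ℤ} (he : ∀ δ, 0 ≤ e δ)
    (hy : D.IsCoroot (x + ∑ δ ∈ T, e δ • D.coroot δ)) {k : ℤ} (hk0 : 0 ≤ k)
    (hk : k ≤ ∑ δ ∈ T, e δ) :
    ∃ f : V → ℤ, (∀ δ, 0 ≤ f δ) ∧ ∑ δ ∈ T, f δ = k ∧
      D.IsCoroot (x + ∑ δ ∈ T, f δ • D.coroot δ) := by
  classical
  obtain ⟨d, hd⟩ : ∃ d : ℕ, ∑ δ ∈ T, e δ = d :=
    ⟨_, (Int.toNat_of_nonneg (Finset.sum_nonneg fun δ _ => he δ)).symm⟩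
  induction d generalizing x e k with
  | zero => exact ⟨0, fun _ => le_rfl, by simp; omega, by simpa using hxC⟩
  | succ d ih =>
    obtain ⟨δ, hδ, heδ, hadd | hsub⟩ := exists_isCoroot_add_or_sub hT hx hxC he (by omega) hy
    all_goals
      obtain ⟨e', rfl⟩ : ∃ e', e = e' + Pi.single δ 1 := ⟨e - Pi.single δ 1, by simp⟩
      have he' : ∀ γ, 0 ≤ e' γ := fun γ => by
        have := he γ
        by_cases hγ : γ = δ <;> simp_all [Pi.single_apply]
      have hsum (f : V → ℤ) : ∑ γ ∈ T, (f + Pi.single δ 1 : V → ℤ) γ = ∑ γ ∈ T, f γ + 1 := by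
        simp [Finset.sum_add_distrib, hδ]
      have hcomb (f : V → ℤ) : ∑ γ ∈ T, (f + Pi.single δ 1 : V → ℤ) γ • D.coroot γ =
          ∑ γ ∈ T, f γ • D.coroot γ + D.coroot δ := by
        simp [add_smul, Finset.sum_add_distrib, Pi.single_apply, hδ]
      rw [hsum] at hd hk
      rw [hcomb] at hy
    · rcases hk0.eq_or_lt with rfl | hk0
      · exact ⟨0, fun _ => le_rfl, by simp, by simpa using hxC⟩
      have hx' : x + D.coroot δ ∉ span ℝ (D.coroot '' T) := fun h => hx <| by
        simpa using sub_mem h (coroot_mem_span hδ)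
      obtain ⟨f, hf0, hfs, hfC⟩ := ih hx' hadd he' (by rwa [add_right_comm, add_assoc])
        (k := k - 1) (by omega) (by omega) (by omega)
      have hδ1 : (0 : V → ℤ) ≤ Pi.single δ 1 := Pi.single_nonneg.2 zero_le_one
      refine ⟨f + Pi.single δ 1, fun γ => add_nonneg (hf0 γ) (hδ1 γ), by rw [hsum, hfs]; ring,
        by rwa [hcomb, ← add_assoc, add_right_comm]⟩
    · rcases hk.eq_or_lt with rfl | hk
      · exact ⟨e' + Pi.single δ 1, he, hsum e', by rwa [hcomb]⟩
      rw [hcomb, ← add_assoc, add_sub_cancel_right] at hsub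
      exact ih hx hxC he' hsub hk0 (by omega) (by omega)

theorem isCoroot_add_smul_of_le {α β γ : V} (hT : T ⊆ D.S) (hβ : β ∈ D.S) (hβT : β ∉ T)
    (hα : α ∈ T) (hγ : γ ∈ span ℝ (D.coroot '' T)) {n m : ℤ}
    (h1 : D.IsCoroot (D.coroot β + γ)) (h2 : D.IsCoroot (D.coroot β + γ + n • D.coroot α))
    (hm0 : 0 ≤ m) (hmn : m ≤ n) : D.IsCoroot (D.coroot β + γ + m • D.coroot α) := by
  have hx : D.coroot β + γ ∉ span ℝ (D.coroot '' ({α} : Finset V)) := fun h =>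
    coroot_add_notMem_span hT hβ hβT hγ (span_mono (Set.image_mono (by simpa using hα)) h)
  obtain ⟨f, -, hf, hfC⟩ := exists_isCoroot_of_le_sum (by simpa using hT hα) hx h1
    (e := fun _ => n) (fun _ => hm0.trans hmn) (by simpa using h2) hm0 (by simpa using hmn)
  simpa [← hf] using hfC

theorem exists_mem_Rpos_ht_eq {β r : V} (hT : T ⊆ D.S) (hβ : β ∈ D.S) (hβT : β ∉ T)
    (hr : r ∈ D.Rpos) {c : V → ℤ} (hc : ∀ δ, 0 ≤ c δ)
    (hrc : D.coroot r = D.coroot β + ∑ δ ∈ T, c δ • D.coroot δ) {t : ℤ} (ht1 : 1 ≤ t)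
    (htr : t ≤ D.ht r) :
    ∃ s ∈ D.Rpos, ∃ f : V → ℤ, (∀ δ, 0 ≤ f δ) ∧
      D.coroot s = D.coroot β + ∑ δ ∈ T, f δ • D.coroot δ ∧ D.ht s = t := by
  have hx : D.coroot β ∉ span ℝ (D.coroot '' T) := by
    simpa using coroot_add_notMem_span hT hβ hβT (zero_mem _)
  rw [ht_eq_of_coroot_eq hT hβ hr hrc] at htr
  obtain ⟨f, hf0, hfs, s, hs, hsf⟩ := exists_isCoroot_of_le_sum hT hx
    (isCoroot_coroot_of_mem_S hβ) hc ⟨r, D.Rpos_subset r hr, hrc⟩ (k := t - 1) (by omega)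
    (by omega)
  have hs' := mem_Rpos_of_coroot_eq_add hT hβ hβT (sum_smul_coroot_mem_span f) hs hsf
  exact ⟨s, hs', f, hf0, hsf, by rw [ht_eq_of_coroot_eq hT hβ hs' hsf, hfs]; ring⟩

end RootSystemWithBase
theorem coroot_string_unbroken_and_fill_gaps_general {V : Type*}
    [NormedAddCommGroup V] [InnerProductSpace ℝ V] [FiniteDimensional ℝ V]
    (D : RootSystemWithBase V)
    (SP : Finset V) (hSP : SP ⊆ D.S) (β : V) (hβS : β ∈ D.S) (hβP : β ∉ SP)
    (α : V) (hα : α ∈ SP) (n : ℤ)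
    (c : V → ℤ) (γ : V)
    (hγ : γ = ∑ δ ∈ SP, c δ • D.coroot δ)
    (h1 : ∃ r ∈ D.R, D.coroot r = D.coroot β + γ)
    (h2 : ∃ r ∈ D.R, D.coroot r = D.coroot β + γ + n • D.coroot α) :
    (∀ m : ℤ, 0 ≤ m → m ≤ n →
      ∃ r ∈ D.R, D.coroot r = D.coroot β + γ + m • D.coroot α) ∧
    -- every maximal string of coroots for `S_P` and `β` with a jump can be
    -- completed into a maximal good string of coroots for `S_P` and `β`
    (∀ (L : ℕ) (a : ℕ → V) (ca : ℕ → V → ℤ),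
      a 0 = β →
      (∀ i ≤ L, a i ∈ D.Rpos) →
      (∀ i ≤ L, (∀ δ, 0 ≤ ca i δ) ∧
        D.coroot (a i) = D.coroot β + ∑ δ ∈ SP, ca i δ • D.coroot δ) →
      (∀ i < L, D.ht (a i) < D.ht (a (i + 1))) →
      -- maximal: the length of the string is `n_β − 1`
      D.ht (a L) = D.n SP β - 1 →
      -- with a jump
      (∃ i < L, D.ht (a i) + 1 < D.ht (a (i + 1))) →
      ∃ (L' : ℕ) (a' : ℕ → V) (ca' : ℕ → V → ℤ),
        a' 0 = β ∧
        (∀ i ≤ L', a' i ∈ D.Rpos) ∧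
        (∀ i ≤ L', (∀ δ, 0 ≤ ca' i δ) ∧
          D.coroot (a' i) = D.coroot β + ∑ δ ∈ SP, ca' i δ • D.coroot δ) ∧
        -- good
        (∀ i ≤ L', D.ht (a' i) = (i : ℤ) + 1) ∧
        -- maximal
        D.ht (a' L') = D.n SP β - 1 ∧
        -- the completed string contains the original one
        (∀ i ≤ L, ∃ i' ≤ L', a' i' = a i)) := by
  refine ⟨fun m hm0 hmn => RootSystemWithBase.isCoroot_add_smul_of_le hSP hβS hβP hα
    (hγ ▸ RootSystemWithBase.sum_smul_coroot_mem_span c) h1 h2 hm0 hmn,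
    fun L a ca ha0 hpos hca hinc hmax _ => ?_⟩
  have hβ1 := D.ht_eq_one_of_mem_S hβS
  obtain ⟨N, a', h0, hgood, htop, hsub⟩ := exists_consecutive_refinement
    (fun p : V × (V → ℤ) => p.1 ∈ D.Rpos ∧ (∀ δ, 0 ≤ p.2 δ) ∧
      D.coroot p.1 = D.coroot β + ∑ δ ∈ SP, p.2 δ • D.coroot δ)
    (fun p => D.ht p.1) (fun i => (a i, ca i)) L (fun i hi => ⟨hpos i hi, hca i hi⟩) hinc
    fun t ht1 htL => by
      obtain ⟨s, hs, f, hf0, hsf, hst⟩ := RootSystemWithBase.exists_mem_Rpos_ht_eq hSP hβS hβP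
        (hpos L le_rfl) (hca L le_rfl).1 (hca L le_rfl).2 (by simpa [ha0, hβ1] using ht1) htL
      exact ⟨(s, f), ⟨hs, hf0, hsf⟩, hst⟩
  simp only [ha0, hβ1] at h0 hgood
  refine ⟨N, fun i => (a' i).1, fun i => (a' i).2, by simp [h0], fun i hi => (hgood i hi).1.1,
    fun i hi => (hgood i hi).1.2, fun i hi => by simp [(hgood i hi).2, add_comm],
    htop.trans hmax, fun j hj => ?_⟩
  obtain ⟨i, hi, hij⟩ := hsub j hj
  exact ⟨i, hi, congrArg Prod.fst hij⟩

/-- Let `β ∈ S ∖ S_P` and suppose `β^∨ + γ` and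
`β^∨ + γ + n·α^∨` are both coroots of roots of `R`, where `α ∈ S_P`, `n` is
a positive integer, and `γ` is a nonnegative integer combination of coroots
of elements of `S_P`.  Then `β^∨ + γ + m·α^∨` is the coroot of a root of `R`
for every integer `0 ≤ m ≤ n`.  Consequently, every maximal string of
coroots for `S_P` and `β` with a jump can be completed, by filling all of
its gaps, into a maximal good string of coroots for `S_P` and `β`. -/
theorem coroot_string_unbroken_and_fill_gaps {V : Type*}
    [NormedAddCommGroup V] [InnerProductSpace ℝ V] [FiniteDimensional ℝ V]
    (D : RootSystemWithBase V)
    (SP : Finset V) (hSP : SP ⊆ D.S) (β : V) (hβS : β ∈ D.S) (hβP : β ∉ SP)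
    (α : V) (hα : α ∈ SP) (n : ℤ) (hn : 0 < n)
    (c : V → ℤ) (hc : ∀ δ, 0 ≤ c δ) (γ : V)
    (hγ : γ = ∑ δ ∈ SP, c δ • D.coroot δ)
    (h1 : ∃ r ∈ D.R, D.coroot r = D.coroot β + γ)
    (h2 : ∃ r ∈ D.R, D.coroot r = D.coroot β + γ + n • D.coroot α) :
    (∀ m : ℤ, 0 ≤ m → m ≤ n →
      ∃ r ∈ D.R, D.coroot r = D.coroot β + γ + m • D.coroot α) ∧
    -- every maximal string of coroots for `S_P` and `β` with a jump can be
    -- completed into a maximal good string of coroots for `S_P` and `β`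
    (∀ (L : ℕ) (a : ℕ → V) (ca : ℕ → V → ℤ),
      a 0 = β →
      (∀ i ≤ L, a i ∈ D.Rpos) →
      (∀ i ≤ L, (∀ δ, 0 ≤ ca i δ) ∧
        D.coroot (a i) = D.coroot β + ∑ δ ∈ SP, ca i δ • D.coroot δ) →
      (∀ i < L, D.ht (a i) < D.ht (a (i + 1))) →
      -- maximal: the length of the string is `n_β − 1`
      D.ht (a L) = D.n SP β - 1 →
      -- with a jump
      (∃ i < L, D.ht (a i) + 1 < D.ht (a (i + 1))) →
      ∃ (L' : ℕ) (a' : ℕ → V) (ca' : ℕ → V → ℤ),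
        a' 0 = β ∧
        (∀ i ≤ L', a' i ∈ D.Rpos) ∧
        (∀ i ≤ L', (∀ δ, 0 ≤ ca' i δ) ∧
          D.coroot (a' i) = D.coroot β + ∑ δ ∈ SP, ca' i δ • D.coroot δ) ∧
        -- good
        (∀ i ≤ L', D.ht (a' i) = (i : ℤ) + 1) ∧
        -- maximal
        D.ht (a' L') = D.n SP β - 1 ∧
        -- the completed string contains the original one
        (∀ i ≤ L, ∃ i' ≤ L', a' i' = a i)) :=
  coroot_string_unbroken_and_fill_gaps_general D SP hSP β hβS hβP α hα n c γ hγ h1 h2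
end
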